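/- arXiv:1810.05832 — 13 statements merged into one kernel-verified Lean document; each statement's English description precedes it below -/
import Mathlib

section
/- Let (X, 𝓑) be a tree-like ball space (i.e., for all B₁, B₂ ∈ 𝓑, if B₁ ∩ B₂ ≠ ∅ then B₁ ⊆ B₂ or B₂ ⊆ B₁). Then the ball space (X, ci(𝓑)) is again tree-like, where ci(𝓑) is the collection of all nonempty intersections of nonempty chains (under inclusion) of members of 𝓑. -/
/-!
In a tree-like family, the intersections of any two subfamilies `C₁`, `C₂` are comparable as soon
as they meet. If every member of `C₂` contains a member of `C₁`, then `⋂₀ C₁ ⊆ ⋂₀ C₂`. Otherwise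
some `c₂ ∈ C₂` contains no member of `C₁`; as `c₂` meets every member of `C₁`, tree-likeness
forces `c₂` inside all of them, so `⋂₀ C₂ ⊆ c₂ ⊆ ⋂₀ C₁`.
-/

/-- `ci 𝓑` is the collection of all nonempty intersections of nonempty
inclusion-chains of members of `𝓑`. -/
def ci {X : Type*} (B : Set (Set X)) : Set (Set X) :=
  {I | I.Nonempty ∧ ∃ C ⊆ B, C.Nonempty ∧ IsChain (· ⊆ ·) C ∧ I = ⋂₀ C}

def IsTreelike {X : Type*} (B : Set (Set X)) : Prop :=
  ∀ b₁ ∈ B, ∀ b₂ ∈ B, (b₁ ∩ b₂).Nonempty → b₁ ⊆ b₂ ∨ b₂ ⊆ b₁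

namespace IsTreelike

variable {X : Type*} {B : Set (Set X)}

theorem mono {B' : Set (Set X)} (hB : IsTreelike B) (h : B' ⊆ B) : IsTreelike B' :=
  fun b₁ hb₁ b₂ hb₂ => hB b₁ (h hb₁) b₂ (h hb₂)

theorem subset_sInter_of_not_subset (hB : IsTreelike B) {C : Set (Set X)} (hC : C ⊆ B)
    {c : Set X} (hc : c ∈ B) (hmeet : (c ∩ ⋂₀ C).Nonempty) (hno : ∀ c' ∈ C, ¬c' ⊆ c) :
    c ⊆ ⋂₀ C := by
  obtain ⟨x, hxc, hxC⟩ := hmeet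
  refine Set.subset_sInter fun c' hc' => ?_
  exact (hB c' (hC hc') c hc ⟨x, Set.mem_sInter.1 hxC c' hc', hxc⟩).resolve_left (hno c' hc')

theorem sInter_subset_or_subset (hB : IsTreelike B) {C₁ C₂ : Set (Set X)} (hC₁ : C₁ ⊆ B)
    (hC₂ : C₂ ⊆ B) (hmeet : (⋂₀ C₁ ∩ ⋂₀ C₂).Nonempty) : ⋂₀ C₁ ⊆ ⋂₀ C₂ ∨ ⋂₀ C₂ ⊆ ⋂₀ C₁ := by
  by_cases h : ∀ c₂ ∈ C₂, ∃ c₁ ∈ C₁, c₁ ⊆ c₂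
  · left
    refine Set.subset_sInter fun c₂ hc₂ => ?_
    obtain ⟨c₁, hc₁, hsub⟩ := h c₂ hc₂
    exact (Set.sInter_subset_of_mem hc₁).trans hsub
  · right
    simp only [not_forall, not_exists, not_and] at h
    obtain ⟨c₂, hc₂, hno⟩ := h
    have hmeet₂ : (c₂ ∩ ⋂₀ C₁).Nonempty :=
      hmeet.mono fun _ hx => ⟨Set.mem_sInter.1 hx.2 c₂ hc₂, hx.1⟩
    exact (Set.sInter_subset_of_mem hc₂).trans
      (hB.subset_sInter_of_not_subset hC₁ (hC₂ hc₂) hmeet₂ hno)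

theorem sInters (hB : IsTreelike B) : IsTreelike {I | ∃ C ⊆ B, I = ⋂₀ C} := by
  rintro _ ⟨C₁, hC₁, rfl⟩ _ ⟨C₂, hC₂, rfl⟩ hmeet
  exact hB.sInter_subset_or_subset hC₁ hC₂ hmeet

theorem ci (hB : IsTreelike B) : IsTreelike (ci B) :=
  hB.sInters.mono fun _ ⟨_, C, hC, _, _, hI⟩ => ⟨C, hC, hI⟩

end IsTreelike

theorem treelike_ci_general {X : Type*} (B : Set (Set X))
    (htree : ∀ b₁ ∈ B, ∀ b₂ ∈ B, (b₁ ∩ b₂).Nonempty → b₁ ⊆ b₂ ∨ b₂ ⊆ b₁) :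
    ∀ b₁ ∈ ci B, ∀ b₂ ∈ ci B, (b₁ ∩ b₂).Nonempty → b₁ ⊆ b₂ ∨ b₂ ⊆ b₁ :=
  IsTreelike.ci htree

/-- If `(X, 𝓑)` is a tree-like ball space, then `(X, ci 𝓑)` is tree-like. -/
theorem treelike_ci {X : Type*} [Nonempty X] (B : Set (Set X))
    (hBne : B.Nonempty) (hball : ∀ b ∈ B, b.Nonempty)
    (htree : ∀ b₁ ∈ B, ∀ b₂ ∈ B, (b₁ ∩ b₂).Nonempty → b₁ ⊆ b₂ ∨ b₂ ⊆ b₁) :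
    ∀ b₁ ∈ ci B, ∀ b₂ ∈ ci B, (b₁ ∩ b₂).Nonempty → b₁ ⊆ b₂ ∨ b₂ ⊆ b₁ :=
  treelike_ci_general B htree
end

section
/- Let (X, 𝓑) be a tree-like ball space. Then ci(ci(𝓑)) = ci(𝓑), i.e., the chain intersection rank of 𝓑 is at most 1. -/
/-!
In a tree-like ball space any family of balls with a common point is a chain. Hence a nonempty
set `I` lies in `ci 𝓑` as soon as some ball contains it and it is the intersection of all balls
containing it. An intersection `I` of a chain of members of `ci 𝓑` has this property: each member
of the chain is itself the intersection of balls, all of which contain `I`.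
-/

namespace BallSpace

variable {X : Type*} {B : Set (Set X)}

theorem mem_ci_of_mem {b : Set X} (hb : b ∈ B) (hne : b.Nonempty) : b ∈ ci B :=
  ⟨hne, {b}, Set.singleton_subset_iff.2 hb, Set.singleton_nonempty b,
    Set.subsingleton_singleton.isChain, (Set.sInter_singleton b).symm⟩

theorem ci_subset_ci_ci : ci B ⊆ ci (ci B) := fun _ hI => mem_ci_of_mem hI hI.1

theorem exists_mem_superset_of_mem_ci {c : Set X} (hc : c ∈ ci B) : ∃ b ∈ B, c ⊆ b := by
  obtain ⟨-, D, hDB, ⟨b, hb⟩, -, rfl⟩ := hc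
  exact ⟨b, hDB hb, Set.sInter_subset_of_mem hb⟩

theorem sInter_supersets_subset_of_mem_ci {I c : Set X} (hc : c ∈ ci B) (hIc : I ⊆ c) :
    ⋂₀ {b ∈ B | I ⊆ b} ⊆ c := by
  obtain ⟨-, D, hDB, -, -, rfl⟩ := hc
  exact Set.subset_sInter fun d hd =>
    Set.sInter_subset_of_mem ⟨hDB hd, hIc.trans (Set.sInter_subset_of_mem hd)⟩

section Treelike

variable (htree : ∀ b₁ ∈ B, ∀ b₂ ∈ B, (b₁ ∩ b₂).Nonempty → b₁ ⊆ b₂ ∨ b₂ ⊆ b₁)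
include htree

theorem isChain_of_nonempty_subset_forall {C : Set (Set X)} {I : Set X} (hCB : C ⊆ B)
    (hI : I.Nonempty) (hIC : ∀ c ∈ C, I ⊆ c) : IsChain (· ⊆ ·) C := by
  obtain ⟨x, hx⟩ := hI
  exact fun c₁ h₁ c₂ h₂ _ => htree c₁ (hCB h₁) c₂ (hCB h₂) ⟨x, hIC c₁ h₁ hx, hIC c₂ h₂ hx⟩

theorem mem_ci_of_sInter_supersets_subset {I : Set X} (hI : I.Nonempty)
    (hball : ∃ b ∈ B, I ⊆ b) (hsub : ⋂₀ {b ∈ B | I ⊆ b} ⊆ I) : I ∈ ci B := by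
  refine ⟨hI, {b ∈ B | I ⊆ b}, Set.sep_subset _ _, hball, ?_, ?_⟩
  · exact isChain_of_nonempty_subset_forall htree (Set.sep_subset _ _) hI fun _ hb => hb.2
  · exact (Set.subset_sInter fun _ hb => hb.2).antisymm hsub

theorem ci_ci_subset_ci : ci (ci B) ⊆ ci B := by
  rintro _ ⟨hI, C, hCB, ⟨c, hc⟩, -, rfl⟩
  have hIc : ∀ c ∈ C, ⋂₀ C ⊆ c := fun _ => Set.sInter_subset_of_mem
  refine mem_ci_of_sInter_supersets_subset htree hI ?_ ?_
  · obtain ⟨b, hb, hcb⟩ := exists_mem_superset_of_mem_ci (hCB hc)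
    exact ⟨b, hb, (hIc c hc).trans hcb⟩
  · exact Set.subset_sInter fun c hc => sInter_supersets_subset_of_mem_ci (hCB hc) (hIc c hc)

end Treelike

end BallSpace

theorem ci_ci_eq_ci_of_treelike_general {X : Type*} (B : Set (Set X))
    (htree : ∀ b₁ ∈ B, ∀ b₂ ∈ B, (b₁ ∩ b₂).Nonempty → b₁ ⊆ b₂ ∨ b₂ ⊆ b₁) :
    ci (ci B) = ci B :=
  (BallSpace.ci_ci_subset_ci htree).antisymm BallSpace.ci_subset_ci_ci

/-- If `(X, 𝓑)` is a tree-like ball space, then `ci (ci 𝓑) = ci 𝓑`,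
i.e. the chain intersection rank of `𝓑` is at most `1`. -/
theorem ci_ci_eq_ci_of_treelike {X : Type*} [Nonempty X] (B : Set (Set X))
    (hBne : B.Nonempty) (hball : ∀ b ∈ B, b.Nonempty)
    (htree : ∀ b₁ ∈ B, ∀ b₂ ∈ B, (b₁ ∩ b₂).Nonempty → b₁ ⊆ b₂ ∨ b₂ ⊆ b₁) :
    ci (ci B) = ci B :=
  ci_ci_eq_ci_of_treelike_general B htree
end

section
/- Let (X, 𝓑) be a tree-like ball space that is spherically complete (every nonempty chain in 𝓑 has nonempty intersection). Then (X, ci(𝓑)) is spherically complete: every nonempty chain in ci(𝓑) has nonempty intersection. -/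
/-- A ball space is spherically complete if every nonempty inclusion-chain of
balls has nonempty intersection. -/
def SphericallyComplete {X : Type*} (B : Set (Set X)) : Prop :=
  ∀ C ⊆ B, C.Nonempty → IsChain (· ⊆ ·) C → (⋂₀ C).Nonempty

open Set

section

variable {X : Type*}

def IsTreeLike (B : Set (Set X)) : Prop :=
  ∀ b₁ ∈ B, ∀ b₂ ∈ B, (b₁ ∩ b₂).Nonempty → b₁ ⊆ b₂ ∨ b₂ ⊆ b₁

def ballsAbove (B 𝒞 : Set (Set X)) : Set (Set X) :=
  {b ∈ B | ∃ I ∈ 𝒞, I ⊆ b}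

theorem IsTreeLike.isChain_ballsAbove {B 𝒞 : Set (Set X)} (hB : IsTreeLike B)
    (h𝒞 : IsChain (· ⊆ ·) 𝒞) (hne : ∀ I ∈ 𝒞, I.Nonempty) :
    IsChain (· ⊆ ·) (ballsAbove B 𝒞) := by
  rintro b₁ ⟨hb₁, I₁, hI₁, hsub₁⟩ b₂ ⟨hb₂, I₂, hI₂, hsub₂⟩ -
  apply hB b₁ hb₁ b₂ hb₂
  rcases h𝒞.total hI₁ hI₂ with h | h
  · exact (hne I₁ hI₁).mono (subset_inter hsub₁ (h.trans hsub₂))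
  · exact (hne I₂ hI₂).mono (subset_inter (h.trans hsub₁) hsub₂)

theorem ballsAbove_nonempty {B 𝒞 : Set (Set X)} (h𝒞 : 𝒞 ⊆ ci B) (hne : 𝒞.Nonempty) :
    (ballsAbove B 𝒞).Nonempty := by
  obtain ⟨I, hI⟩ := hne
  obtain ⟨-, C, hCB, ⟨b, hb⟩, -, rfl⟩ := h𝒞 hI
  exact ⟨b, hCB hb, _, hI, sInter_subset_of_mem hb⟩

theorem sInter_ballsAbove_subset {B 𝒞 : Set (Set X)} (h𝒞 : 𝒞 ⊆ ci B) {I : Set X} (hI : I ∈ 𝒞) :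
    ⋂₀ ballsAbove B 𝒞 ⊆ I := by
  obtain ⟨-, C, hCB, -, -, rfl⟩ := h𝒞 hI
  exact sInter_subset_sInter fun b hb => ⟨hCB hb, _, hI, sInter_subset_of_mem hb⟩

end

theorem sphericallyComplete_ci_of_treelike_general {X : Type*} (B : Set (Set X))
    (htree : ∀ b₁ ∈ B, ∀ b₂ ∈ B, (b₁ ∩ b₂).Nonempty → b₁ ⊆ b₂ ∨ b₂ ⊆ b₁)
    (hsc : SphericallyComplete B) :
    SphericallyComplete (ci B) := by
  intro 𝒞 h𝒞 hne hchain
  have hD : IsChain (· ⊆ ·) (ballsAbove B 𝒞) :=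
    IsTreeLike.isChain_ballsAbove htree hchain fun I hI => (h𝒞 hI).1
  obtain ⟨x, hx⟩ := hsc _ (fun _ hb => hb.1) (ballsAbove_nonempty h𝒞 hne) hD
  exact ⟨x, mem_sInter.2 fun I hI => sInter_ballsAbove_subset h𝒞 hI hx⟩

/-- If a tree-like ball space `(X, 𝓑)` is spherically complete, then so is `(X, ci 𝓑)`. -/
theorem sphericallyComplete_ci_of_treelike {X : Type*} [Nonempty X] (B : Set (Set X))
    (hBne : B.Nonempty) (hball : ∀ b ∈ B, b.Nonempty)
    (htree : ∀ b₁ ∈ B, ∀ b₂ ∈ B, (b₁ ∩ b₂).Nonempty → b₁ ⊆ b₂ ∨ b₂ ⊆ b₁)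
    (hsc : SphericallyComplete B) :
    SphericallyComplete (ci B) :=
  sphericallyComplete_ci_of_treelike_general B htree hsc
end

section
/- Let (X, d) be an ultrametric space with value poset Γ. Then the function δ sending the precise ball B(x,y) to d(x,y) is a well-defined ultra-diameter on the family 𝓑_d of precise balls: (D1) if B(x,y) ⊆ B(u,w) then d(x,y) ≤ d(u,w); (D2) if B(x,y) ∩ B(u,w) ≠ ∅ and d(x,y) ≤ d(u,w) then B(x,y) ⊆ B(u,w). -/
section PreciseBall

variable {X Γ : Type*}

def preciseBall [LE Γ] (d : X → X → Γ) (x y : X) : Set X := {z | d x z ≤ d x y}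

variable {d : X → X → Γ} {x y u w : X}

theorem dist_le_of_preciseBall_subset [Preorder Γ] [OrderBot Γ] (hself : ∀ x, d x x = ⊥)
    (hsymm : ∀ x y, d x y = d y x) (htri : ∀ x y z γ, d x y ≤ γ → d y z ≤ γ → d x z ≤ γ)
    (h : preciseBall d x y ⊆ preciseBall d u w) : d x y ≤ d u w := by
  have hx : d u x ≤ d u w := h (show d x x ≤ d x y from (hself x).symm ▸ bot_le)
  have hy : d u y ≤ d u w := h (le_refl (d x y))
  exact htri x u y _ (hsymm x u ▸ hx) hy

theorem dist_eq_of_preciseBall_eq [PartialOrder Γ] [OrderBot Γ] (hself : ∀ x, d x x = ⊥)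
    (hsymm : ∀ x y, d x y = d y x) (htri : ∀ x y z γ, d x y ≤ γ → d y z ≤ γ → d x z ≤ γ)
    (h : preciseBall d x y = preciseBall d u w) : d x y = d u w :=
  le_antisymm (dist_le_of_preciseBall_subset hself hsymm htri h.subset)
    (dist_le_of_preciseBall_subset hself hsymm htri h.symm.subset)

theorem preciseBall_subset_of_inter_nonempty [Preorder Γ] (hsymm : ∀ x y, d x y = d y x)
    (htri : ∀ x y z γ, d x y ≤ γ → d y z ≤ γ → d x z ≤ γ)
    (hmeet : (preciseBall d x y ∩ preciseBall d u w).Nonempty) (hle : d x y ≤ d u w) :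
    preciseBall d x y ⊆ preciseBall d u w := by
  obtain ⟨a, hxa, hua⟩ := hmeet
  have hux : d u x ≤ d u w := htri u a x _ hua (hsymm a x ▸ hxa.trans hle)
  exact fun z hxz => htri u x z _ hux (le_trans hxz hle)

end PreciseBall

/-- The map `B(x,y) ↦ d(x,y)` is a well-defined ultra-diameter on the family of
precise balls of an ultrametric space: it does not depend on representatives,
it is increasing (D1), and it satisfies the ultrametric condition (D2). -/
theorem ultrametric_ultraDiameter {X Γ : Type*} [PartialOrder Γ] [OrderBot Γ]
    (d : X → X → Γ)
    (hsymm : ∀ x y, d x y = d y x)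
    (hbot : ∀ x y, d x y = ⊥ ↔ x = y)
    (htri : ∀ x y z γ, d x y ≤ γ → d y z ≤ γ → d x z ≤ γ) :
    (∀ x y u w : X, {z | d x z ≤ d x y} = {z | d u z ≤ d u w} → d x y = d u w) ∧
    (∀ x y u w : X, {z | d x z ≤ d x y} ⊆ {z | d u z ≤ d u w} → d x y ≤ d u w) ∧
    (∀ x y u w : X, ({z | d x z ≤ d x y} ∩ {z | d u z ≤ d u w}).Nonempty →
      d x y ≤ d u w → {z | d x z ≤ d x y} ⊆ {z | d u z ≤ d u w}) := by
  have hself : ∀ x, d x x = ⊥ := fun x => (hbot x x).mpr rfl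
  exact ⟨fun _ _ _ _ => dist_eq_of_preciseBall_eq hself hsymm htri,
    fun _ _ _ _ => dist_le_of_preciseBall_subset hself hsymm htri,
    fun _ _ _ _ => preciseBall_subset_of_inter_nonempty hsymm htri⟩
end

section
/- Let δ : 𝓑 → Γ be an ultra-diameter with Γ a narrow poset (no infinite antichains). Then every infinite linked family 𝓓 ⊆ 𝓑 (any two members intersect nontrivially) contains a chain 𝓒 (linearly ordered by inclusion) with |𝓒| = |𝓓|. -/
open Cardinal

section EDM

universe u

variable {β : Type u}

/-- The set of elements of `S` incomparable (w.r.t. `G`) to `x`. -/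
def IncSet (G : β → β → Prop) (S : Set β) (x : β) : Set β :=
  {y ∈ S | y ≠ x ∧ ¬ G x y}

theorem incSet_subset (G : β → β → Prop) (S : Set β) (x : β) : IncSet G S x ⊆ S :=
  fun _ hy => hy.1

/-- If there is no infinite `G`-independent subset of `T`, then there is a subset `S₀` of `T`
of full cardinality in which every point has fewer than `#T` incomparable elements. -/
theorem exists_uniform (G : β → β → Prop) (hsym : ∀ a b, G a b → G b a) (T : Set β)
    (hno : ∀ A ⊆ T, A.Pairwise (fun a b => ¬ G a b) → A.Finite) :
    ∃ S₀ ⊆ T, #S₀ = #T ∧ ∀ x ∈ S₀, #(IncSet G S₀ x) < #T := by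
  by_contra hcon
  push_neg at hcon
  -- every full-size subset has a point of full incomparability degree
  have hcon' : ∀ S : {S : Set β // S ⊆ T ∧ #S = #T},
      ∃ x ∈ S.1, #(IncSet G S.1 x) = #T := by
    rintro ⟨S, hST, hScard⟩
    obtain ⟨x, hxS, hx⟩ := hcon S hST hScard
    exact ⟨x, hxS, le_antisymm (mk_le_mk_of_subset ((incSet_subset G S x).trans hST)) hx⟩
  let R := {S : Set β // S ⊆ T ∧ #S = #T}
  let pick : R → β := fun S => (hcon' S).choose
  have hpick : ∀ S : R, pick S ∈ S.1 ∧ #(IncSet G S.1 (pick S)) = #T :=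
    fun S => ⟨(hcon' S).choose_spec.1, (hcon' S).choose_spec.2⟩
  let step : R → R := fun S =>
    ⟨IncSet G S.1 (pick S), (incSet_subset G S.1 (pick S)).trans S.2.1, (hpick S).2⟩
  let seq : ℕ → R := fun n => step^[n] ⟨T, subset_rfl, rfl⟩
  have hseq : ∀ n, seq (n + 1) = step (seq n) := by
    intro n
    simp only [seq, Function.iterate_succ_apply']
  let a : ℕ → β := fun n => pick (seq n)
  have hsucc : ∀ n, (seq (n + 1)).1 = IncSet G (seq n).1 (a n) := by
    intro n; rw [hseq n]
  have hmono : ∀ n m, n ≤ m → (seq m).1 ⊆ (seq n).1 := by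
    intro n m hnm
    induction m with
    | zero => cases Nat.le_zero.mp hnm; exact subset_rfl
    | succ m ih =>
      rcases Nat.lt_or_ge n (m + 1) with h | h
      · exact ((hsucc m) ▸ incSet_subset G (seq m).1 (a m)).trans (ih (Nat.lt_succ_iff.mp h))
      · cases le_antisymm hnm h; exact subset_rfl
  have hstrict : ∀ n m, n < m → (seq m).1 ⊆ IncSet G (seq n).1 (a n) := by
    intro n m hnm
    exact (hmono (n + 1) m hnm).trans (hsucc n ▸ subset_rfl)
  have hamem : ∀ n, a n ∈ (seq n).1 := fun n => (hpick (seq n)).1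
  have hkey : ∀ n m, n < m → a m ≠ a n ∧ ¬ G (a n) (a m) := by
    intro n m hnm
    have := hstrict n m hnm (hamem m)
    exact ⟨this.2.1, this.2.2⟩
  have hainj : Function.Injective a := by
    intro n m hnm
    by_contra hne
    rcases Ne.lt_or_gt hne with h | h
    · exact (hkey n m h).1 hnm.symm
    · exact (hkey m n h).1 hnm
  have hrangesub : Set.range a ⊆ T := by
    rintro _ ⟨n, rfl⟩
    exact (seq n).2.1 (hamem n)
  have hpw : (Set.range a).Pairwise (fun x y => ¬ G x y) := by
    rintro _ ⟨n, rfl⟩ _ ⟨m, rfl⟩ hne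
    have hnm : n ≠ m := fun h => hne (by rw [h])
    rcases hnm.lt_or_gt with h | h
    · exact (hkey n m h).2
    · intro hg; exact (hkey m n h).2 (hsym _ _ hg)
  exact (Set.infinite_range_of_injective hainj) (hno _ hrangesub hpw)

/-- The regular case: a set of regular cardinality with no infinite independent subset
contains a `G`-clique of full size. -/
theorem regular_chain (G : β → β → Prop) (hsym : ∀ a b, G a b → G b a) (T : Set β)
    (hreg : (#T).IsRegular)
    (hno : ∀ A ⊆ T, A.Pairwise (fun a b => ¬ G a b) → A.Finite) :
    ∃ C ⊆ T, C.Pairwise G ∧ #C = #T := by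
  obtain ⟨S₀, hS₀T, hS₀card, hunif⟩ := exists_uniform G hsym T hno
  have hGsymm : Symmetric G := fun {a b} h => hsym a b h
  -- Zorn's lemma: a maximal G-clique inside S₀
  obtain ⟨M, hM⟩ := zorn_subset {C : Set β | C ⊆ S₀ ∧ C.Pairwise G} (by
    intro c hc hchain
    refine ⟨⋃₀ c, ⟨?_, ?_⟩, fun s hs => Set.subset_sUnion_of_mem hs⟩
    · exact Set.sUnion_subset fun s hs => (hc hs).1
    · intro x hx y hy hxy
      obtain ⟨s, hs, hxs⟩ := hx
      obtain ⟨t, ht, hyt⟩ := hy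
      rcases eq_or_ne s t with rfl | hst
      · exact (hc hs).2 hxs hyt hxy
      · rcases hchain hs ht hst with h | h
        · exact (hc ht).2 (h hxs) hyt hxy
        · exact (hc hs).2 hxs (h hyt) hxy)
  have hMS₀ : M ⊆ S₀ := hM.prop.1
  have hMpw : M.Pairwise G := hM.prop.2
  rcases eq_or_lt_of_le ((mk_le_mk_of_subset hMS₀).trans_eq hS₀card) with heq | hMlt
  · exact ⟨M, hMS₀.trans hS₀T, hMpw, heq⟩
  -- M is small; every element of S₀ \ M is incomparable to some element of M
  have hwit : ∀ x : ↥(S₀ \ M), ∃ m : ↥M, x.1 ≠ m.1 ∧ ¬ G x.1 m.1 := by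
    rintro ⟨x, hxS₀, hxM⟩
    by_contra hall
    push_neg at hall
    have hins : insert x M ∈ {C : Set β | C ⊆ S₀ ∧ C.Pairwise G} := by
      constructor
      · exact Set.insert_subset hxS₀ hMS₀
      · refine (haveI : Std.Symm G := ⟨hsym⟩; Set.pairwise_insert_of_symm).2 ⟨hMpw, ?_⟩
        intro b hb hxb
        by_contra hg
        exact absurd (hall ⟨b, hb⟩ hxb) (by simpa using hg)
    exact hxM (hM.2 hins (Set.subset_insert x M) (Set.mem_insert x M))
  let f : ↥(S₀ \ M) → ↥M := fun x => (hwit x).choose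
  have hf : ∀ x : ↥(S₀ \ M), x.1 ≠ (f x).1 ∧ ¬ G x.1 (f x).1 :=
    fun x => (hwit x).choose_spec
  -- S₀ \ M has full size
  have hdiff : #(S₀ \ M : Set β) = #T := by
    by_contra hne
    have hlt : #(S₀ \ M : Set β) < #T :=
      lt_of_le_of_ne (mk_le_mk_of_subset (Set.diff_subset.trans hS₀T)) hne
    have hsubu : S₀ ⊆ (S₀ \ M) ∪ M := by
      intro y hy
      by_cases h : y ∈ M
      · exact Set.mem_union_right _ h
      · exact Set.mem_union_left _ ⟨hy, h⟩
    have : #S₀ ≤ #(S₀ \ M : Set β) + #M :=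
      (mk_le_mk_of_subset hsubu).trans (mk_union_le _ _)
    exact absurd (hS₀card ▸ this) (not_le.mpr (add_lt_of_lt hreg.aleph0_le hlt hMlt))
  -- pigeonhole: some fiber of f has full size
  have hfiber : ∃ m₀ : ↥M, #T ≤ #{x : ↥(S₀ \ M) // f x = m₀} := by
    by_contra hall
    push_neg at hall
    have h1 : #(↥(S₀ \ M)) = Cardinal.sum (fun m : ↥M => #{x : ↥(S₀ \ M) // f x = m}) := by
      rw [← Cardinal.mk_sigma]
      exact (Cardinal.mk_congr (Equiv.sigmaFiberEquiv f)).symm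
    have h2 : Cardinal.sum (fun m : ↥M => #{x : ↥(S₀ \ M) // f x = m}) < #T :=
      Cardinal.sum_lt_of_isRegular hreg hMlt hall
    rw [← h1, hdiff] at h2
    exact lt_irrefl _ h2
  obtain ⟨m₀, hm₀⟩ := hfiber
  -- the fiber injects into IncSet G S₀ m₀
  have hinto : ∀ x : {x : ↥(S₀ \ M) // f x = m₀}, (x.1 : β) ∈ IncSet G S₀ m₀.1 := by
    rintro ⟨x, hfx⟩
    have h := hf x
    rw [hfx] at h
    exact ⟨x.2.1, h.1, fun hg => h.2 (hsym _ _ hg)⟩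
  have hcard : #T ≤ #(IncSet G S₀ m₀.1) := by
    refine hm₀.trans (Cardinal.mk_le_of_injective (f := fun x => (⟨(x.1 : β), hinto x⟩ :
      ↥(IncSet G S₀ m₀.1))) ?_)
    intro x y h
    simp only [Subtype.mk.injEq] at h
    exact Subtype.ext (Subtype.ext h)
  exact absurd hcard (not_le.mpr (hunif m₀.1 (hMS₀ m₀.2)))

theorem main_edm (G : β → β → Prop) (hsym : ∀ a b, G a b → G b a) (T : Set β)
    (hT : ℵ₀ ≤ #T)
    (hno : ∀ A ⊆ T, A.Pairwise (fun a b => ¬ G a b) → A.Finite) :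
    ∃ C ⊆ T, C.Pairwise G ∧ #C = #T := by
  by_cases hreg : (#T).IsRegular
  · exact regular_chain G hsym T hreg hno
  -- singular case
  set κ := #T with hκ
  obtain ⟨S₀, hS₀T, hS₀card, hunif⟩ := exists_uniform G hsym T hno
  set μ := κ.ord.cof with hμ
  have hμκ : μ < κ := by
    rcases lt_or_ge μ κ with h | h
    · exact h
    · exact absurd ⟨hT, h⟩ hreg
  have haleph0μ : ℵ₀ ≤ μ := Ordinal.aleph0_le_cof.2 (Cardinal.isSuccLimit_ord hT)
  have haleph0κ : ℵ₀ < κ := by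
    rcases lt_or_eq_of_le hT with h | h
    · exact h
    · exact absurd (h ▸ Cardinal.isRegular_aleph0) hreg
  -- every cardinal below κ has a regular cardinal strictly between it and κ
  have hbetween : ∀ c < κ, (Order.succ (max c ℵ₀)).IsRegular ∧ c < Order.succ (max c ℵ₀) ∧
      Order.succ (max c ℵ₀) < κ := by
    intro c hc
    have h1 : (Order.succ (max c ℵ₀)).IsRegular := Cardinal.isRegular_succ (le_max_right _ _)
    have h2 : c < Order.succ (max c ℵ₀) := (le_max_left c ℵ₀).trans_lt (Order.lt_succ _)
    have h3 : Order.succ (max c ℵ₀) ≤ κ := Order.succ_le_of_lt (max_lt hc haleph0κ)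
    rcases lt_or_eq_of_le h3 with h | h
    · exact ⟨h1, h2, h⟩
    · exact absurd (h ▸ h1) hreg
  -- a cofinal family of regular cardinals indexed by O := μ.ord.toType
  obtain ⟨ι, fo, hlsub, hι⟩ := Ordinal.exists_lsub_cof κ.ord
  set O := μ.ord.ToType with hO
  have hOcard : #O = μ := by rw [hO, mk_toType, Cardinal.card_ord]
  have hequiv : Nonempty (O ≃ ι) := Cardinal.eq.1 (by rw [hOcard, hι])
  obtain ⟨e⟩ := hequiv
  set g : O → Cardinal := fun i => Order.succ (max ((fo (e i)).card) ℵ₀) with hg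
  have hfocard : ∀ j : ι, (fo j).card < κ := by
    intro j
    have : fo j < κ.ord := hlsub ▸ Ordinal.lt_lsub fo j
    exact Cardinal.lt_ord.1 this
  have hgreg : ∀ i : O, (g i).IsRegular := fun i => (hbetween _ (hfocard (e i))).1
  have hglt : ∀ i : O, g i < κ := fun i => (hbetween _ (hfocard (e i))).2.2
  have hgcof : ∀ c < κ, ∃ i : O, c < g i := by
    intro c hc
    have h1 : c.ord < κ.ord := Cardinal.ord_lt_ord.2 hc
    rw [← hlsub] at h1
    obtain ⟨j, hj⟩ := Ordinal.lt_lsub_iff.1 h1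
    refine ⟨e.symm j, ?_⟩
    have h2 : c ≤ (fo j).card := by
      have := Ordinal.card_le_card hj
      rwa [Cardinal.card_ord] at this
    calc c ≤ (fo j).card := h2
      _ < Order.succ (max ((fo j).card) ℵ₀) := (le_max_left _ _).trans_lt (Order.lt_succ _)
      _ = g (e.symm j) := by rw [hg]; simp
  -- the key existence result for one block
  have key : ∀ ν : Cardinal, ν.IsRegular → ν < κ → ∀ J : Set β, #J < κ →
      ∃ C : Set β, C ⊆ S₀ \ J ∧ C.Pairwise G ∧ #C = ν ∧
        ∃ lam, lam < κ ∧ ∀ x ∈ C, #(IncSet G S₀ x) ≤ lam := by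
    intro ν hνreg hνκ J hJ
    -- S₀ \ J has size κ
    have hbig : κ ≤ #(S₀ \ J : Set β) := by
      by_contra hlt
      push_neg at hlt
      have hsubu : S₀ ⊆ (S₀ \ J) ∪ J := by
        intro y hy
        by_cases h : y ∈ J
        · exact Set.mem_union_right _ h
        · exact Set.mem_union_left _ ⟨hy, h⟩
      have h0 : #S₀ ≤ #(S₀ \ J : Set β) + #J :=
        (mk_le_mk_of_subset hsubu).trans (mk_union_le _ _)
      rw [hS₀card] at h0
      exact absurd h0 (not_le.mpr (Cardinal.add_lt_of_lt hT hlt hJ))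
    -- covered by the sets of bounded incomparability degree
    have hcover : (S₀ \ J) ⊆ ⋃ i : O, ({x ∈ S₀ | #(IncSet G S₀ x) ≤ g i} \ J) := by
      intro x hx
      obtain ⟨i, hi⟩ := hgcof (#(IncSet G S₀ x)) (hunif x hx.1)
      exact Set.mem_iUnion.2 ⟨i, ⟨hx.1, hi.le⟩, hx.2⟩
    have hexistsi : ∃ i : O, ν ≤ #({x ∈ S₀ | #(IncSet G S₀ x) ≤ g i} \ J : Set β) := by
      by_contra hall
      push_neg at hall
      have h1 : κ ≤ #(⋃ i : O, ({x ∈ S₀ | #(IncSet G S₀ x) ≤ g i} \ J : Set β)) :=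
        hbig.trans (mk_le_mk_of_subset hcover)
      have h2 : #(⋃ i : O, ({x ∈ S₀ | #(IncSet G S₀ x) ≤ g i} \ J : Set β)) ≤
          Cardinal.sum (fun i : O => #({x ∈ S₀ | #(IncSet G S₀ x) ≤ g i} \ J : Set β)) :=
        Cardinal.mk_iUnion_le_sum_mk
      have h3 : Cardinal.sum (fun i : O => #({x ∈ S₀ | #(IncSet G S₀ x) ≤ g i} \ J : Set β)) ≤
          Cardinal.sum (fun _ : O => ν) :=
        Cardinal.sum_le_sum _ _ (fun i => (hall i).le)
      have h4 : Cardinal.sum (fun _ : O => ν) = #O * ν := Cardinal.sum_const' O ν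
      have h5 : #O * ν < κ := by
        rw [hOcard]
        exact Cardinal.mul_lt_of_lt hT hμκ hνκ
      exact absurd ((h1.trans (h2.trans h3)).trans_eq h4) (not_le.mpr h5)
    obtain ⟨i₀, hi₀⟩ := hexistsi
    obtain ⟨R, hRsub, hRcard⟩ := Cardinal.le_mk_iff_exists_subset.1 hi₀
    have hRreg : (#R).IsRegular := hRcard ▸ hνreg
    obtain ⟨C, hCR, hCpw, hCcard⟩ := regular_chain G hsym R hRreg (by
      intro A hAR hApw
      exact hno A (hAR.trans (hRsub.trans (Set.diff_subset.trans
        ((Set.sep_subset _ _).trans hS₀T)))) hApw)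
    refine ⟨C, ?_, hCpw, hCcard.trans hRcard, g i₀, hglt i₀, ?_⟩
    · refine hCR.trans (hRsub.trans ?_)
      intro y hy
      exact ⟨hy.1.1, hy.2⟩
    · intro x hx
      exact (hRsub (hCR hx)).1.2
  -- the transfinite block construction
  have wf : WellFounded ((· < ·) : O → O → Prop) := (inferInstance : WellFoundedLT O).wf
  let BJ : Set β → Set β := fun C => C ∪ ⋃ x ∈ C, IncSet G S₀ x
  let F : ∀ i : O, ((j : O) → j < i → Set β) → Set β := fun i prev =>
    if h : #(⋃ j : Set.Iio i, BJ (prev j.1 j.2)) < κ then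
      (key (g i) (hgreg i) (hglt i) _ h).choose
    else ∅
  let Cf : O → Set β := wf.fix F
  have hCfeq : ∀ i, Cf i = F i (fun j _ => Cf j) := fun i => WellFounded.fix_eq wf F i
  let Junk : O → Set β := fun i => ⋃ j : Set.Iio i, BJ (Cf j.1)
  have props : ∀ i : O, #(Junk i) < κ →
      Cf i ⊆ S₀ \ Junk i ∧ (Cf i).Pairwise G ∧ #(Cf i) = g i ∧
        ∃ lam, lam < κ ∧ ∀ x ∈ Cf i, #(IncSet G S₀ x) ≤ lam := by
    intro i h
    have heq : Cf i = (key (g i) (hgreg i) (hglt i) (Junk i) h).choose := by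
      rw [hCfeq i]
      exact dif_pos h
    rw [heq]
    exact (key (g i) (hgreg i) (hglt i) (Junk i) h).choose_spec
  have inv : ∀ i : O, #(Junk i) < κ := by
    intro i
    induction i using WellFounded.induction wf with
    | _ i IH =>
      have hBJ : ∀ j : Set.Iio i, #(BJ (Cf j.1)) < κ := by
        rintro ⟨j, hj⟩
        obtain ⟨hsub, hpw, hcard, lam, hlam, hbound⟩ := props j (IH j hj)
        have h1 : #(BJ (Cf j)) ≤ #(Cf j) + #(⋃ x ∈ Cf j, IncSet G S₀ x) :=
          mk_union_le _ _
        have h2 : #(⋃ x ∈ Cf j, IncSet G S₀ x) ≤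
            Cardinal.sum (fun x : Cf j => #(IncSet G S₀ x.1)) := by
          rw [Set.biUnion_eq_iUnion]
          exact Cardinal.mk_iUnion_le_sum_mk
        have h3 : Cardinal.sum (fun x : Cf j => #(IncSet G S₀ x.1)) ≤
            Cardinal.sum (fun _ : Cf j => lam) :=
          Cardinal.sum_le_sum _ _ (fun x => hbound x.1 x.2)
        have h4 : Cardinal.sum (fun _ : Cf j => lam) = #(Cf j) * lam :=
          Cardinal.sum_const' _ _
        have h5 : #(Cf j) * lam < κ := by
          rw [hcard]
          exact Cardinal.mul_lt_of_lt hT (hglt j) hlam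
        have h6 : #(⋃ x ∈ Cf j, IncSet G S₀ x) < κ :=
          lt_of_le_of_lt (h2.trans (h3.trans_eq h4)) h5
        calc #(BJ (Cf j)) ≤ #(Cf j) + #(⋃ x ∈ Cf j, IncSet G S₀ x) := h1
          _ < κ := Cardinal.add_lt_of_lt hT (hcard ▸ hglt j) h6
      have hIio : #(Set.Iio i) < μ := Cardinal.mk_Iio_ord_toType i
      have hsup : (⨆ j : Set.Iio i, #(BJ (Cf j.1))) < κ :=
        Ordinal.iSup_lt (by rw [← hμ]; exact hIio) hBJ
      calc #(Junk i) ≤ #(Set.Iio i) * ⨆ j : Set.Iio i, #(BJ (Cf j.1)) :=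
            Cardinal.mk_iUnion_le _
        _ < κ := Cardinal.mul_lt_of_lt hT (hIio.trans hμκ) hsup
  -- assemble the chain
  refine ⟨⋃ i : O, Cf i, ?_, ?_, ?_⟩
  · intro x hx
    obtain ⟨i, hi⟩ := Set.mem_iUnion.1 hx
    exact hS₀T ((props i (inv i)).1 hi).1
  · intro x hx y hy hxy
    obtain ⟨i, hi⟩ := Set.mem_iUnion.1 hx
    obtain ⟨j, hj⟩ := Set.mem_iUnion.1 hy
    rcases lt_trichotomy i j with h | h | h
    · -- i < j : y avoids Junk j ⊇ BJ (Cf i) ⊇ IncSet of x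
      have hyS : y ∈ S₀ \ Junk j := (props j (inv j)).1 hj
      have hnotinc : y ∉ IncSet G S₀ x := by
        intro hmem
        exact hyS.2 (Set.mem_iUnion.2 ⟨⟨i, h⟩, Set.mem_union_right _
          (Set.mem_biUnion hi hmem)⟩)
      by_contra hg
      exact hnotinc ⟨hyS.1, hxy.symm, hg⟩
    · subst h
      exact (props i (inv i)).2.1 hi hj hxy
    · -- j < i : symmetric
      have hxS : x ∈ S₀ \ Junk i := (props i (inv i)).1 hi
      have hnotinc : x ∉ IncSet G S₀ y := by
        intro hmem
        exact hxS.2 (Set.mem_iUnion.2 ⟨⟨j, h⟩, Set.mem_union_right _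
          (Set.mem_biUnion hj hmem)⟩)
      by_contra hg
      have : ¬ G y x := fun h' => hg (hsym _ _ h')
      exact hnotinc ⟨hxS.1, hxy, this⟩
  · refine le_antisymm ?_ ?_
    · refine mk_le_mk_of_subset ?_
      intro x hx
      obtain ⟨i, hi⟩ := Set.mem_iUnion.1 hx
      exact hS₀T ((props i (inv i)).1 hi).1
    · by_contra hlt
      push_neg at hlt
      obtain ⟨i, hi⟩ := hgcof _ hlt
      have h1 : #(Cf i) ≤ #(⋃ i : O, Cf i) :=
        mk_le_mk_of_subset (Set.subset_iUnion Cf i)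
      rw [(props i (inv i)).2.2.1] at h1
      exact absurd h1 (not_le.mpr hi)

end EDM

/-- If `δ : 𝓑 → Γ` is an ultra-diameter into a narrow poset, then every infinite
linked subfamily `𝓓 ⊆ 𝓑` contains a chain of the same cardinality as `𝓓`. -/
theorem linked_contains_chain_of_ultraDiameter {α Γ : Type*} [PartialOrder Γ]
    (B : Set (Set α)) (hball : ∀ b ∈ B, b.Nonempty)
    (δ : Set α → Γ)
    (hD1 : ∀ b₀ ∈ B, ∀ b₁ ∈ B, b₀ ⊆ b₁ → δ b₀ ≤ δ b₁)
    (hD2 : ∀ b₀ ∈ B, ∀ b₁ ∈ B, (b₀ ∩ b₁).Nonempty → δ b₀ ≤ δ b₁ → b₀ ⊆ b₁)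
    (hnarrow : ∀ A : Set Γ, IsAntichain (· ≤ ·) A → A.Finite)
    (D : Set (Set α)) (hDB : D ⊆ B) (hinf : D.Infinite)
    (hlinked : ∀ b₁ ∈ D, ∀ b₂ ∈ D, (b₁ ∩ b₂).Nonempty) :
    ∃ C ⊆ D, IsChain (· ⊆ ·) C ∧ #C = #D := by
  classical
  set G : Set α → Set α → Prop := fun a b => a ⊆ b ∨ b ⊆ a with hG
  have hsym : ∀ a b, G a b → G b a := fun a b h => h.symm
  have hT : ℵ₀ ≤ #D := by
    rw [← Cardinal.infinite_iff]
    exact Set.infinite_coe_iff.2 hinf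
  have hno : ∀ A ⊆ D, A.Pairwise (fun a b => ¬ G a b) → A.Finite := by
    intro A hAD hpw
    have hcmp : ∀ a ∈ A, ∀ b ∈ A, δ a ≤ δ b → a ⊆ b := by
      intro a ha b hb hle
      exact hD2 a (hDB (hAD ha)) b (hDB (hAD hb)) (hlinked a (hAD ha) b (hAD hb)) hle
    have hanti : IsAntichain (· ≤ ·) (δ '' A) := by
      rintro _ ⟨a, ha, rfl⟩ _ ⟨b, hb, rfl⟩ hne hle
      have hab : a ≠ b := fun h => hne (by rw [h])
      exact (hpw ha hb hab) (Or.inl (hcmp a ha b hb hle))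
    have hinj : Set.InjOn δ A := by
      intro a ha b hb hab
      by_contra hne
      exact (hpw ha hb hne) (Or.inl (hcmp a ha b hb hab.le))
    exact Set.Finite.of_finite_image (hnarrow _ hanti) hinj
  obtain ⟨C, hCD, hpw, hcard⟩ := main_edm G hsym D hT hno
  exact ⟨C, hCD, fun a ha b hb hne => hpw ha hb hne, hcard⟩
end

section
/- Every narrow poset is a finite union of directed subsets. -/
namespace NarrowAux

variable {P : Type*} [PartialOrder P]

/-- Two elements are compatible if they have a common upper bound. -/
def Compat (x y : P) : Prop := ∃ z, x ≤ z ∧ y ≤ z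

lemma compat_refl (x : P) : Compat x x := ⟨x, le_refl x, le_refl x⟩

lemma compat_symm {x y : P} (h : Compat x y) : Compat y x :=
  let ⟨z, h1, h2⟩ := h; ⟨z, h2, h1⟩

lemma incompat_symmetric : Symmetric (fun x y : P => ¬ Compat x y) :=
  fun _ _ h hc => h (compat_symm hc)

/-- A strong antichain: pairwise incompatible set. -/
def SAC (B : Set P) : Prop := B.Pairwise fun x y => ¬ Compat x y

lemma SAC.antichain {B : Set P} (h : SAC B) : IsAntichain (· ≤ ·) B :=
  fun _x hx _y hy hxy hle => h hx hy hxy ⟨_, hle, le_refl _⟩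

/-- `X` contains arbitrarily large finite strong antichains. -/
def Unbdd (X : Set P) : Prop :=
  ∀ n : ℕ, ∃ B : Finset P, ↑B ⊆ X ∧ SAC (B : Set P) ∧ n ≤ B.card

/-- Any strong antichain inside `X` extends to one that is "maximal in `X`". -/
lemma exists_maximal_sac (X B0 : Set P) (hB0X : B0 ⊆ X) (hB0 : SAC B0) :
    ∃ M, B0 ⊆ M ∧ M ⊆ X ∧ SAC M ∧ ∀ x ∈ X, ∃ m ∈ M, Compat x m := by
  classical
  set S : Set (Set P) := {B | B ⊆ X ∧ SAC B} with hS
  have hchain : ∀ c ⊆ S, IsChain (· ⊆ ·) c → c.Nonempty →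
      ∃ ub ∈ S, ∀ s ∈ c, s ⊆ ub := by
    intro c hcS hc hne
    refine ⟨⋃₀ c, ⟨Set.sUnion_subset fun s hs => (hcS hs).1, ?_⟩,
      fun s hs => Set.subset_sUnion_of_mem hs⟩
    intro x hx y hy hxy
    obtain ⟨s, hs, hxs⟩ := hx
    obtain ⟨t, ht, hyt⟩ := hy
    rcases hc.total hs ht with hst | hts
    · exact (hcS ht).2 (hst hxs) hyt hxy
    · exact (hcS hs).2 hxs (hts hyt) hxy
  obtain ⟨M, hBM, hmax⟩ := zorn_subset_nonempty S hchain B0 ⟨hB0X, hB0⟩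
  refine ⟨M, hBM, hmax.prop.1, hmax.prop.2, ?_⟩
  intro x hx
  by_cases hxM : x ∈ M
  · exact ⟨x, hxM, compat_refl x⟩
  by_contra hcon
  push_neg at hcon
  have hmem : insert x M ∈ S := by
    refine ⟨Set.insert_subset hx hmax.prop.1, ?_⟩
    refine (have : Std.Symm (fun x y : P => ¬ Compat x y) := ⟨fun _ _ h => incompat_symmetric h⟩; Set.pairwise_insert_of_symm (r := fun x y : P => ¬ Compat x y)).2
      ⟨hmax.prop.2, fun m hm _ hc => hcon m hm hc⟩
  have := hmax.2 hmem (Set.subset_insert x M)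
  exact hxM (this (Set.mem_insert x M))

/-- Pigeonhole: if a finite strong antichain `A` "covers" `X` by compatibility and
each upper cone of an element of `A` has bounded strong antichains, then so does `X`. -/
lemma not_unbdd_of_cover (X : Set P) (A : Finset P)
    (hcov : ∀ x ∈ X, ∃ a ∈ A, Compat x a)
    (hbd : ∀ a ∈ A, ¬ Unbdd (Set.Ici a)) : ¬ Unbdd X := by
  classical
  have h1 : ∀ a ∈ A, ∃ N : ℕ, ∀ B : Finset P, ↑B ⊆ Set.Ici a → SAC (B : Set P) →
      B.card < N := by
    intro a ha
    have h := hbd a ha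
    unfold Unbdd at h
    push_neg at h
    exact h
  choose! Nf hNf using h1
  intro hU
  obtain ⟨B, hBX, hBsac, hBcard⟩ := hU (∑ a ∈ A, Nf a + 1)
  have hcov' : ∀ x, x ∈ X → ∃ a, ∃ c, a ∈ A ∧ x ≤ c ∧ a ≤ c := by
    intro x hx
    obtain ⟨a, ha, z, h1, h2⟩ := hcov x hx
    exact ⟨a, z, ha, h1, h2⟩
  choose! f g hfA hxg hfg using hcov'
  have hfB : ∀ b ∈ B, f b ∈ A := fun b hb => hfA b (hBX hb)
  have hginj : Set.InjOn g ↑B := by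
    intro b hb b' hb' he
    by_contra hne
    exact hBsac hb hb' hne ⟨g b, hxg b (hBX hb), he ▸ hxg b' (hBX hb')⟩
  have hsum : B.card = ∑ a ∈ A, (B.filter fun b => f b = a).card :=
    Finset.card_eq_sum_card_fiberwise hfB
  have hfib : ∀ a ∈ A, (B.filter fun b => f b = a).card ≤ Nf a := by
    intro a ha
    set Ba := B.filter fun b => f b = a with hBa
    have hsub : Ba ⊆ B := Finset.filter_subset _ _
    have hcard : (Ba.image g).card = Ba.card :=
      Finset.card_image_of_injOn (hginj.mono (by exact_mod_cast hsub))
    have hIci : ↑(Ba.image g) ⊆ Set.Ici a := by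
      intro z hz
      simp only [Finset.coe_image, Set.mem_image, Finset.mem_coe] at hz
      obtain ⟨b, hb, rfl⟩ := hz
      have hfb : f b = a := (Finset.mem_filter.mp hb).2
      exact hfb ▸ hfg b (hBX (hsub hb))
    have hsac : SAC ((Ba.image g : Finset P) : Set P) := by
      intro z hz w hw hzw
      simp only [Finset.coe_image, Set.mem_image, Finset.mem_coe] at hz hw
      obtain ⟨b, hb, rfl⟩ := hz
      obtain ⟨b', hb', rfl⟩ := hw
      have hbne : b ≠ b' := fun h => hzw (h ▸ rfl)
      rintro ⟨w, h1, h2⟩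
      exact hBsac (hsub hb) (hsub hb') hbne
        ⟨w, le_trans (hxg b (hBX (hsub hb))) h1, le_trans (hxg b' (hBX (hsub hb'))) h2⟩
    have := hNf a ha (Ba.image g) hIci hsac
    omega
  have : B.card ≤ ∑ a ∈ A, Nf a := hsum ▸ Finset.sum_le_sum hfib
  omega

/-- Step: from an unbounded set, extract an element plus an incompatible
element whose upper cone is still unbounded. -/
lemma step (hnarrow : ∀ A : Set P, IsAntichain (· ≤ ·) A → A.Finite)
    {X : Set P} (hX : Unbdd X) :
    ∃ c q, c ∈ X ∧ q ∈ X ∧ ¬ Compat c q ∧ Unbdd (Set.Ici q) := by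
  classical
  obtain ⟨B, hBX, hBsac, hB2⟩ := hX 2
  obtain ⟨x, hx, y, hy, hxy⟩ := Finset.one_lt_card.mp (show 1 < B.card by omega)
  have hxX : x ∈ X := hBX hx
  have hyX : y ∈ X := hBX hy
  have hxyC : ¬ Compat x y := hBsac hx hy hxy
  have hpair : SAC ({x, y} : Set P) := by
    refine (have : Std.Symm (fun x y : P => ¬ Compat x y) := ⟨fun _ _ h => incompat_symmetric h⟩; Set.pairwise_insert_of_symm (r := fun x y : P => ¬ Compat x y)).2
      ⟨Set.pairwise_singleton _ _, ?_⟩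
    intro b hb _
    rw [Set.mem_singleton_iff] at hb
    exact hb ▸ hxyC
  obtain ⟨M, hsubM, hMX, hMsac, hMcov⟩ :=
    exists_maximal_sac X {x, y} (by rintro z (rfl | rfl); exacts [hxX, hyX]) hpair
  have hMfin : M.Finite := hnarrow M hMsac.antichain
  set F := hMfin.toFinset with hF
  have hFM : (F : Set P) = M := hMfin.coe_toFinset
  have hcov : ∀ z ∈ X, ∃ a ∈ F, Compat z a := by
    intro z hz
    obtain ⟨m, hm, hc⟩ := hMcov z hz
    exact ⟨m, by rw [← hFM] at hm; exact_mod_cast hm, hc⟩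
  have : ¬ ∀ a ∈ F, ¬ Unbdd (Set.Ici a) := fun h => not_unbdd_of_cover X F hcov h hX
  push_neg at this
  obtain ⟨a, haF, haU⟩ := this
  have haM : a ∈ M := by rw [← hFM]; exact_mod_cast haF
  have hxM : x ∈ M := hsubM (Set.mem_insert x _)
  have hyM : y ∈ M := hsubM (Set.mem_insert_of_mem _ rfl)
  by_cases hax : x = a
  · refine ⟨y, a, hyX, hMX haM, ?_, haU⟩
    exact fun hc => hxyC (hax ▸ compat_symm hc)
  · exact ⟨x, a, hxX, hMX haM, hMsac hxM haM hax, haU⟩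

/-- The whole narrow poset does not contain arbitrarily large strong antichains. -/
lemma not_unbdd_univ (hnarrow : ∀ A : Set P, IsAntichain (· ≤ ·) A → A.Finite) :
    ¬ Unbdd (Set.univ : Set P) := by
  classical
  intro hU
  obtain ⟨c0, q0, -, -, -, hq0⟩ := step hnarrow hU
  have key : ∀ q : {q : P // Unbdd (Set.Ici q)},
      ∃ (c : P) (q' : {q : P // Unbdd (Set.Ici q)}),
        q.1 ≤ c ∧ q.1 ≤ q'.1 ∧ ¬ Compat c q'.1 := by
    intro q
    obtain ⟨c, q', hc, hq', hnc, hu⟩ := step hnarrow q.2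
    exact ⟨c, ⟨q', hu⟩, hc, hq', hnc⟩
  choose C F hC hF hcomp using key
  set s : ℕ → {q : P // Unbdd (Set.Ici q)} := fun n => F^[n] ⟨q0, hq0⟩ with hs
  have hsucc : ∀ n, s (n + 1) = F (s n) := fun n => Function.iterate_succ_apply' F n _
  have hmono : ∀ n k, (s n).1 ≤ (s (n + k)).1 := by
    intro n k
    induction k with
    | zero => exact le_refl _
    | succ k ih =>
      have := hF (s (n + k))
      rw [← hsucc (n + k)] at this
      exact le_trans ih this
  have hmono' : ∀ n m, n ≤ m → (s n).1 ≤ (s m).1 := by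
    intro n m h
    obtain ⟨k, rfl⟩ := Nat.exists_eq_add_of_le h
    exact hmono n k
  set c : ℕ → P := fun n => C (s n) with hc
  have hincmp : ∀ n m, n < m → ¬ Compat (c n) (c m) := by
    intro n m hnm ⟨w, h1, h2⟩
    have h3 : (s (n + 1)).1 ≤ c m :=
      le_trans (hmono' (n + 1) m hnm) (hC (s m))
    have h4 : ¬ Compat (C (s n)) ((F (s n)).1) := hcomp (s n)
    rw [← hsucc n] at h4
    exact h4 ⟨w, h1, le_trans h3 h2⟩
  have hinj : Function.Injective c := by
    intro n m he
    by_contra hne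
    rcases Nat.lt_or_ge n m with h | h
    · exact hincmp n m h ⟨c m, he ▸ le_refl _, le_refl _⟩
    · have h' : m < n := lt_of_le_of_ne h (Ne.symm hne)
      exact hincmp m n h' ⟨c n, he ▸ le_refl _, le_refl _⟩
  have hanti : IsAntichain (· ≤ ·) (Set.range c) := by
    rintro _ ⟨n, rfl⟩ _ ⟨m, rfl⟩ hne hle
    have hnm : n ≠ m := fun h => hne (h ▸ rfl)
    rcases Nat.lt_or_ge n m with h | h
    · exact hincmp n m h ⟨c m, hle, le_refl _⟩
    · exact hincmp m n (lt_of_le_of_ne h (Ne.symm hnm)) ⟨c m, le_refl _, hle⟩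
  exact (hnarrow _ hanti).not_infinite (Set.infinite_range_of_injective hinj)

end NarrowAux

open NarrowAux in
/-- Every narrow poset is a finite union of directed subsets. -/
theorem narrow_finite_union_directed {P : Type*} [PartialOrder P]
    (hnarrow : ∀ A : Set P, IsAntichain (· ≤ ·) A → A.Finite) :
    ∃ (n : ℕ) (f : Fin n → Set P),
      (⋃ i, f i) = Set.univ ∧ ∀ i, DirectedOn (· ≤ ·) (f i) := by
  classical
  rcases isEmpty_or_nonempty P with hP | hP
  · exact ⟨0, Fin.elim0, by ext x; exact (IsEmpty.false x).elim, fun i => i.elim0⟩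
  have hbd := not_unbdd_univ hnarrow
  unfold Unbdd at hbd
  push_neg at hbd
  obtain ⟨N, hN⟩ := hbd
  set T : Set ℕ := {n | ∃ B : Finset P, SAC (B : Set P) ∧ B.card = n} with hT
  have hT0 : (0 : ℕ) ∈ T := ⟨∅, by simp [SAC], rfl⟩
  have hTbdd : BddAbove T := by
    refine ⟨N, ?_⟩
    rintro m ⟨B, hB, rfl⟩
    exact (hN B (Set.subset_univ _) hB).le
  set n := sSup T with hn
  have hnT : n ∈ T := Nat.sSup_mem ⟨0, hT0⟩ hTbdd
  have hmaxT : ∀ m ∈ T, m ≤ n := fun m hm => le_csSup hTbdd hm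
  obtain ⟨A, hA, hAcard⟩ := hnT
  obtain ⟨x0⟩ := hP
  have h1T : (1 : ℕ) ∈ T := ⟨{x0}, by simp [SAC], by simp⟩
  have hn1 : 1 ≤ n := hmaxT 1 h1T
  -- every element is compatible with some element of A
  have hcov : ∀ x : P, ∃ a ∈ A, Compat x a := by
    intro x
    by_contra hcon
    push_neg at hcon
    have hxA : x ∉ A := fun hx => hcon x hx (compat_refl x)
    have hsac : SAC ((insert x A : Finset P) : Set P) := by
      rw [Finset.coe_insert]
      refine (have : Std.Symm (fun x y : P => ¬ Compat x y) := ⟨fun _ _ h => incompat_symmetric h⟩; Set.pairwise_insert_of_symm (r := fun x y : P => ¬ Compat x y)).2 ⟨hA, ?_⟩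
      intro b hb _
      exact hcon b hb
    have hmem : n + 1 ∈ T :=
      ⟨insert x A, hsac, by rw [Finset.card_insert_of_notMem hxA, hAcard]⟩
    have := hmaxT _ hmem
    omega
  -- the compatibility cone over each a ∈ A is directed
  have hdir : ∀ a ∈ A, DirectedOn (· ≤ ·) {x | Compat x a} := by
    intro a ha x hx y hy
    obtain ⟨u, hxu, hau⟩ := hx
    obtain ⟨v, hyv, hav⟩ := hy
    by_cases huv : Compat u v
    · obtain ⟨w, huw, hvw⟩ := huv
      exact ⟨w, ⟨w, le_refl w, le_trans hau huw⟩, le_trans hxu huw, le_trans hyv hvw⟩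
    exfalso
    have hup : ∀ z : P, a ≤ z → ∀ b ∈ A, b ≠ a → ¬ Compat z b := by
      rintro z haz b hb hba ⟨w, h1, h2⟩
      exact hA ha hb (Ne.symm hba) ⟨w, le_trans haz h1, h2⟩
    have hnotinA : ∀ z : P, a ≤ z → z ∉ A.erase a := by
      intro z haz hz
      have hzA : z ∈ A := Finset.mem_of_mem_erase hz
      have hzne : z ≠ a := Finset.ne_of_mem_erase hz
      exact hA ha hzA (Ne.symm hzne) ⟨z, haz, le_refl z⟩
    have huv' : u ≠ v := fun h => huv ⟨v, h ▸ le_refl _, le_refl _⟩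
    have huE : u ∉ A.erase a := hnotinA u hau
    have hvE : v ∉ A.erase a := hnotinA v hav
    have huI : u ∉ insert v (A.erase a) := by
      simp only [Finset.mem_insert]
      push_neg
      exact ⟨huv', huE⟩
    have hEsac : SAC ((A.erase a : Finset P) : Set P) := by
      refine hA.mono ?_
      intro z hz
      exact Finset.mem_of_mem_erase (by exact_mod_cast hz)
    have hEmem : ∀ b : P, b ∈ ((A.erase a : Finset P) : Set P) → b ∈ A ∧ b ≠ a := by
      intro b hb
      have hb' : b ∈ A.erase a := by exact_mod_cast hb
      exact ⟨Finset.mem_of_mem_erase hb', Finset.ne_of_mem_erase hb'⟩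
    have hsac : SAC ((insert u (insert v (A.erase a)) : Finset P) : Set P) := by
      rw [Finset.coe_insert, Finset.coe_insert]
      refine (have : Std.Symm (fun x y : P => ¬ Compat x y) := ⟨fun _ _ h => incompat_symmetric h⟩; Set.pairwise_insert_of_symm (r := fun x y : P => ¬ Compat x y)).2 ⟨?_, ?_⟩
      · refine (have : Std.Symm (fun x y : P => ¬ Compat x y) := ⟨fun _ _ h => incompat_symmetric h⟩; Set.pairwise_insert_of_symm (r := fun x y : P => ¬ Compat x y)).2 ⟨hEsac, ?_⟩
        intro b hb _
        obtain ⟨hbA, hba⟩ := hEmem b hb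
        exact hup v hav b hbA hba
      · intro b hb _
        rcases Set.mem_insert_iff.mp hb with rfl | hb'
        · exact huv
        · obtain ⟨hbA, hba⟩ := hEmem b hb'
          exact hup u hau b hbA hba
    have hcard : (insert u (insert v (A.erase a))).card = n + 1 := by
      rw [Finset.card_insert_of_notMem huI, Finset.card_insert_of_notMem hvE,
        Finset.card_erase_of_mem ha, hAcard]
      omega
    have hmem : n + 1 ∈ T := ⟨insert u (insert v (A.erase a)), hsac, hcard⟩
    have := hmaxT _ hmem
    omega
  -- assemble the cover
  set e := A.equivFin with he
  refine ⟨n, fun i => {x | Compat x ((e.symm (Fin.cast hAcard.symm i) : P))}, ?_, ?_⟩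
  · ext x
    simp only [Set.mem_iUnion, Set.mem_univ, iff_true, Set.mem_setOf_eq]
    obtain ⟨a, haA, hca⟩ := hcov x
    refine ⟨Fin.cast hAcard (e ⟨a, haA⟩), ?_⟩
    have heq : ((e.symm (Fin.cast hAcard.symm (Fin.cast hAcard (e ⟨a, haA⟩)))) : P) = a := by
      simp
    rw [heq]
    exact hca
  · intro i
    exact hdir _ (e.symm (Fin.cast hAcard.symm i)).2
end

section
/- Let X be a set and 𝓣 ⊆ 𝒫(X) such that for every two distinct x, y ∈ X there is a smallest set B_𝓣(x,y) ∈ 𝓣 containing both x and y. Define u(x,y) = B_𝓣(x,y) for x ≠ y and u(x,x) = ∅, with values in 𝓣 ∪ {∅} ordered by inclusion. Then u is an ultrametric on X with least value ∅. -/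
/-! Symmetry is the uniqueness of least elements. For the ultrametric inequality, a nonempty
`γ` containing `u x y` and `u y z` contains `x` and `z`, so it contains the least set `u x z`. -/

section SmallestCommonSet

variable {X : Type*} {T : Set (Set X)} {x y z : X} {B γ : Set X}

theorem isLeast_setOf_mem_mem_comm :
    IsLeast {S ∈ T | x ∈ S ∧ y ∈ S} B ↔ IsLeast {S ∈ T | y ∈ S ∧ x ∈ S} B := by
  simp only [and_comm (a := x ∈ _)]

theorem IsLeast.subset_of_mem_insert_empty (hB : IsLeast {S ∈ T | x ∈ S ∧ z ∈ S} B)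
    (hγ : γ ∈ insert ∅ T) (hx : x ∈ γ) (hz : z ∈ γ) : B ⊆ γ :=
  hB.2 ⟨hγ.resolve_left (Set.Nonempty.ne_empty ⟨x, hx⟩), hx, hz⟩

end SmallestCommonSet

/-- If every two distinct points of `X` are contained in a smallest member of `𝓣`,
then `u(x,y) = B_𝓣(x,y)` (and `u(x,x) = ∅`) is an ultrametric on `X` with value
set contained in `𝓣 ∪ {∅}` (ordered by inclusion) and least value `∅`. -/
theorem induced_ultrametric {X : Type*} (T : Set (Set X)) (u : X → X → Set X)
    (hdiag : ∀ x, u x x = ∅)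
    (hu : ∀ x y : X, x ≠ y →
      u x y ∈ T ∧ x ∈ u x y ∧ y ∈ u x y ∧ ∀ S ∈ T, x ∈ S → y ∈ S → u x y ⊆ S) :
    (∀ x y, u x y ∈ insert (∅ : Set X) T) ∧
    (∀ x y, u x y = u y x) ∧
    (∀ x y, u x y = ∅ ↔ x = y) ∧
    (∀ x y z : X, ∀ γ ∈ insert (∅ : Set X) T, u x y ⊆ γ → u y z ⊆ γ → u x z ⊆ γ) := by
  have hleast : ∀ x y, x ≠ y → IsLeast {S ∈ T | x ∈ S ∧ y ∈ S} (u x y) := fun x y h =>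
    let ⟨hT, hx, hy, hmin⟩ := hu x y h
    ⟨⟨hT, hx, hy⟩, fun S ⟨hS, hxS, hyS⟩ => hmin S hS hxS hyS⟩
  refine ⟨fun x y => ?_, fun x y => ?_, fun x y => ?_, fun x y z γ hγ hxy hyz => ?_⟩
  · rcases eq_or_ne x y with rfl | h
    · exact Or.inl (hdiag x)
    · exact Or.inr (hu x y h).1
  · rcases eq_or_ne x y with rfl | h
    · rfl
    · exact (hleast x y h).unique (isLeast_setOf_mem_mem_comm.2 (hleast y x h.symm))
  · refine ⟨fun h => ?_, fun h => h ▸ hdiag x⟩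
    by_contra hne
    exact Set.Nonempty.ne_empty ⟨x, (hu x y hne).2.1⟩ h
  · rcases eq_or_ne x y with rfl | hxy'
    · exact hyz
    rcases eq_or_ne y z with rfl | hyz'
    · exact hxy
    rcases eq_or_ne x z with rfl | hxz
    · exact hdiag x ▸ Set.empty_subset γ
    exact (hleast x z hxz).subset_of_mem_insert_empty hγ (hxy (hu x y hxy').2.1)
      (hyz (hu y z hyz').2.2.1)
end

section
/- With the setup of the previous statement (𝓣 ⊆ 𝒫(X) with smallest sets B_𝓣(x,y), and the induced ultrametric u), the precise ultrametric ball B(x,y) = {z ∈ X : u(x,z) ≤ u(x,y)} equals B_𝓣(x,y) for all distinct x, y ∈ X. -/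
/-! For `z ≠ x`, the set `u x z` is the smallest member of `T` containing `x` and `z`, and
`u x y` is such a member as soon as it contains `z`; so `u x z ⊆ u x y ↔ z ∈ u x y`.
The centre `x` lies on both sides, since `u x x = ∅` and `x ∈ u x y`. -/

theorem smallest_set_subset_iff_mem {X : Type*} {T : Set (Set X)} {u : X → X → Set X}
    (hu : ∀ x y : X, x ≠ y →
      u x y ∈ T ∧ x ∈ u x y ∧ y ∈ u x y ∧ ∀ S ∈ T, x ∈ S → y ∈ S → u x y ⊆ S)
    {x y z : X} (hxy : x ≠ y) (hxz : x ≠ z) : u x z ⊆ u x y ↔ z ∈ u x y := by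
  obtain ⟨hyT, hxy_mem, -, -⟩ := hu x y hxy
  obtain ⟨-, -, hz_mem, hz_min⟩ := hu x z hxz
  exact ⟨fun h ↦ h hz_mem, fun hz ↦ hz_min _ hyT hxy_mem hz⟩

/-- With the induced ultrametric `u` coming from a family `𝓣` with smallest sets
`B_𝓣(x,y)`, the precise ball `B(x,y) = {z : u x z ⊆ u x y}` equals `B_𝓣(x,y) = u x y`
for all distinct `x, y`. -/
theorem precise_ball_eq_smallest_set {X : Type*} (T : Set (Set X)) (u : X → X → Set X)
    (hdiag : ∀ x, u x x = ∅)
    (hu : ∀ x y : X, x ≠ y →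
      u x y ∈ T ∧ x ∈ u x y ∧ y ∈ u x y ∧ ∀ S ∈ T, x ∈ S → y ∈ S → u x y ⊆ S) :
    ∀ x y : X, x ≠ y → {z | u x z ⊆ u x y} = u x y := by
  intro x y hxy
  ext z
  rcases eq_or_ne x z with rfl | hxz
  · simpa [hdiag] using (hu x y hxy).2.1
  · exact smallest_set_subset_iff_mem hu hxy hxz
end

section
/- For any family 𝓐 of nonempty sets there exists a family of sets 𝓑 such that ci(𝓑) = 𝓑 ∪ 𝓐, where ci(𝓑) is the set of nonempty intersections of nonempty ⊆-chains from 𝓑. Concretely, choosing pairwise disjoint countable sets E(A) = {e_{A,n} : n ∈ ℕ} disjoint from all members of 𝓐, and setting Eₙ(A) = A ∪ {e_{A,i} : i ≥ n} and 𝓑 = {Eₙ(A) : n ∈ ℕ, A ∈ 𝓐}, one has ci(𝓑) = 𝓑 ∪ 𝓐. -/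
open Set

def withTail {α : Type*} (e : Set α → ℕ → α) (a : Set α) (n : ℕ) : Set α :=
  a ∪ {x | ∃ i ≥ n, x = e a i}

theorem mem_ci_of_mem {X : Type*} {B : Set (Set X)} {s : Set X} (hs : s ∈ B)
    (hne : s.Nonempty) : s ∈ ci B :=
  ⟨hne, {s}, singleton_subset_iff.2 hs, singleton_nonempty s, IsChain.singleton,
    (sInter_singleton s).symm⟩

theorem Antitone.iInter_mem_ci {X ι : Type*} [LinearOrder ι] [Nonempty ι] {B : Set (Set X)}
    {s : ι → Set X} (hs : Antitone s) (hB : range s ⊆ B) (hne : (⋂ i, s i).Nonempty) :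
    ⋂ i, s i ∈ ci B :=
  ⟨hne, range s, hB, range_nonempty s, hs.isChain_range, (sInter_range s).symm⟩

theorem Antitone.sInter_mem_range_or_eq_iInter {X : Type*} {s : ℕ → Set X} (hs : Antitone s)
    {C : Set (Set X)} (hC : C ⊆ range s) (hne : C.Nonempty) :
    ⋂₀ C ∈ range s ∨ ⋂₀ C = ⋂ n, s n := by
  have hmem : ∀ c ∈ C, ∃ n ∈ s ⁻¹' C, s n = c := fun c hc ↦
    let ⟨n, hn⟩ := hC hc; ⟨n, by rwa [mem_preimage, hn], hn⟩
  by_cases hbdd : BddAbove (s ⁻¹' C)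
  · left
    obtain ⟨c, hc⟩ := hne
    obtain ⟨n, hn, -⟩ := hmem c hc
    have hlast : s (sSup (s ⁻¹' C)) ∈ C := Nat.sSup_mem ⟨n, hn⟩ hbdd
    refine ⟨sSup (s ⁻¹' C), (sInter_subset_of_mem hlast).antisymm' ?_⟩
    rintro x hx _ hc
    obtain ⟨m, hm, rfl⟩ := hmem _ hc
    exact hs (le_csSup hbdd hm) hx
  · right
    refine subset_antisymm (subset_iInter fun n ↦ ?_) ?_
    · obtain ⟨m, hm, hnm⟩ := not_bddAbove_iff.1 hbdd n
      exact (sInter_subset_of_mem hm).trans (hs hnm.le)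
    · rintro x hx _ hc
      obtain ⟨m, -, rfl⟩ := hmem _ hc
      exact mem_iInter.1 hx m

section withTail

variable {α : Type*} {e : Set α → ℕ → α}

theorem withTail_antitone (a : Set α) : Antitone (withTail e a) := by
  rintro m n hmn x (hx | ⟨i, hi, rfl⟩)
  · exact Or.inl hx
  · exact Or.inr ⟨i, hmn.trans hi, rfl⟩

theorem iInter_withTail {a : Set α} (havoid : ∀ i, e a i ∉ a) (hinj : Function.Injective (e a)) :
    ⋂ n, withTail e a n = a := by
  refine subset_antisymm (fun x hx ↦ ?_) (subset_iInter fun n ↦ subset_union_left)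
  rcases mem_iInter.1 hx 0 with hxa | ⟨i, -, rfl⟩
  · exact hxa
  · rcases mem_iInter.1 hx (i + 1) with hxa | ⟨j, hj, hij⟩
    · exact absurd hxa (havoid i)
    · exact absurd (hinj hij) (by omega)

variable {A : Set (Set α)} (havoid : ∀ a ∈ A, ∀ n : ℕ, e a n ∉ ⋃₀ A)
  (hinj : ∀ a ∈ A, ∀ b ∈ A, ∀ n m : ℕ, e a n = e b m → a = b ∧ n = m)
include havoid hinj

/-- The point `e a n` of `withTail e a n` determines `a`. -/
theorem eq_of_withTail_subset {a b : Set α} (ha : a ∈ A) (hb : b ∈ A) {n m : ℕ}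
    (h : withTail e a n ⊆ withTail e b m) : a = b := by
  rcases h (Or.inr ⟨n, le_rfl, rfl⟩) with hxb | ⟨j, -, hj⟩
  · exact absurd ⟨b, hb, hxb⟩ (havoid a ha n)
  · exact (hinj a ha b hb n j hj).1

theorem isChain_subset_range_withTail {C : Set (Set α)}
    (hCB : C ⊆ {s | ∃ a ∈ A, ∃ n : ℕ, s = withTail e a n}) (hC : IsChain (· ⊆ ·) C)
    {a : Set α} (ha : a ∈ A) {n : ℕ} (hn : withTail e a n ∈ C) : C ⊆ range (withTail e a) := by
  intro c hc
  obtain ⟨b, hb, m, rfl⟩ := hCB hc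
  rcases hC.total hc hn with h | h
  · exact ⟨m, by rw [eq_of_withTail_subset havoid hinj hb ha h]⟩
  · exact ⟨m, by rw [eq_of_withTail_subset havoid hinj ha hb h]⟩

end withTail

/-- For a family `𝓐` of nonempty sets, with pairwise disjoint countable sets of new
elements `e_{A,n}` avoiding all members of `𝓐`, setting
`Eₙ(A) = A ∪ {e_{A,i} : i ≥ n}` and `𝓑 = {Eₙ(A)}`, one has `ci 𝓑 = 𝓑 ∪ 𝓐`. -/
theorem ci_eq_union {α : Type*} (A : Set (Set α)) (hA : ∀ a ∈ A, a.Nonempty)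
    (e : Set α → ℕ → α)
    (havoid : ∀ a ∈ A, ∀ n : ℕ, e a n ∉ ⋃₀ A)
    (hinj : ∀ a ∈ A, ∀ b ∈ A, ∀ n m : ℕ, e a n = e b m → a = b ∧ n = m) :
    ci {s | ∃ a ∈ A, ∃ n : ℕ, s = a ∪ {x | ∃ i ≥ n, x = e a i}} =
      {s | ∃ a ∈ A, ∃ n : ℕ, s = a ∪ {x | ∃ i ≥ n, x = e a i}} ∪ A := by
  change ci {s | ∃ a ∈ A, ∃ n : ℕ, s = withTail e a n} =
    {s | ∃ a ∈ A, ∃ n : ℕ, s = withTail e a n} ∪ A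
  have hbase : ∀ a ∈ A, ⋂ n, withTail e a n = a := fun a ha ↦
    iInter_withTail (fun i hi ↦ havoid a ha i ⟨a, ha, hi⟩)
      (fun i j hij ↦ (hinj a ha a ha i j hij).2)
  ext s
  constructor
  · rintro ⟨-, C, hCB, ⟨_, hc⟩, hC, rfl⟩
    obtain ⟨a, ha, n, rfl⟩ := hCB hc
    have hCa := isChain_subset_range_withTail havoid hinj hCB hC ha hc
    rcases (withTail_antitone a).sInter_mem_range_or_eq_iInter hCa ⟨_, hc⟩ with ⟨m, hm⟩ | h
    · exact Or.inl ⟨a, ha, m, hm.symm⟩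
    · exact Or.inr (by rwa [h, hbase a ha])
  · rintro (⟨a, ha, n, rfl⟩ | ha)
    · exact mem_ci_of_mem ⟨a, ha, n, rfl⟩ ((hA a ha).mono subset_union_left)
    · rw [← hbase s ha]
      exact (withTail_antitone s).iInter_mem_ci (range_subset_iff.2 fun n ↦ ⟨s, ha, n, rfl⟩)
        (by rw [hbase s ha]; exact hA s ha)
end

section
/- Let X = (ω+1) × ω, and for m, k < ω let B_{m,k} = {(n,k) : m ≤ n ≤ ω} ∪ {(ω,ℓ) : k ≤ ℓ < ω}. Let 𝓣 consist of all B_{m,k}, all two-element sets {(ω,k),(ω,ℓ)} with k ≠ ℓ, and X itself. Then for every two distinct points of X there is a smallest member of 𝓣 containing both. -/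
/-- The ball `B_{m,k} = {(n,k) : m ≤ n ≤ ω} ∪ {(ω,ℓ) : k ≤ ℓ < ω}` in
`X = (ω+1) × ω`, modelled as `ℕ∞ × ℕ`. -/
def Bmk (m k : ℕ) : Set (ℕ∞ × ℕ) :=
  {p | (p.2 = k ∧ (m : ℕ∞) ≤ p.1) ∨ (p.1 = ⊤ ∧ k ≤ p.2)}

/-- The family `𝓣`: all balls `B_{m,k}`, all doubletons `{(ω,k),(ω,ℓ)}` with
`k ≠ ℓ`, and `X` itself. -/
def Tfam : Set (Set (ℕ∞ × ℕ)) :=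
  {s | ∃ m k : ℕ, s = Bmk m k} ∪
    {s | ∃ k l : ℕ, k ≠ l ∧ s = {((⊤ : ℕ∞), k), ((⊤ : ℕ∞), l)}} ∪
    {Set.univ}

/-!
A point `(a, i)` with `a < ω` lies only in `X` and in the balls `B_{m,i}` with `m ≤ a`, which
decrease as `m` grows. So for such a point the smallest member containing a second point `q` is
the ball with the largest admissible `m` when some ball `B_{m,i}` with `m ≤ a` contains `q`, and
`X` otherwise. Two points on the column `ω` are separated from everything else by their doubleton.
-/

open Set

def tfamContaining (p q : ℕ∞ × ℕ) : Set (Set (ℕ∞ × ℕ)) :=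
  {t | t ∈ Tfam ∧ p ∈ t ∧ q ∈ t}

lemma tfamContaining_comm (p q : ℕ∞ × ℕ) : tfamContaining p q = tfamContaining q p := by
  ext t
  simp only [tfamContaining, mem_ofPred_eq, and_comm (a := p ∈ t)]

lemma mem_Bmk_top {l m k : ℕ} : ((⊤ : ℕ∞), l) ∈ Bmk m k ↔ k ≤ l := by
  simp only [Bmk, mem_ofPred_eq, le_top, and_true, true_and]
  constructor
  · rintro (rfl | h) <;> omega
  · exact Or.inr

lemma mem_Bmk_coe {a i m k : ℕ} : ((a : ℕ∞), i) ∈ Bmk m k ↔ i = k ∧ m ≤ a := by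
  simp [Bmk]

lemma Bmk_subset_Bmk {m m' k : ℕ} (h : m ≤ m') : Bmk m' k ⊆ Bmk m k := by
  rintro ⟨x, y⟩ (⟨rfl, hx⟩ | hx)
  · exact Or.inl ⟨rfl, le_trans (by exact_mod_cast h) hx⟩
  · exact Or.inr hx

lemma Bmk_mem_Tfam (m k : ℕ) : Bmk m k ∈ Tfam := Or.inl (Or.inl ⟨m, k, rfl⟩)

lemma univ_mem_Tfam : (univ : Set (ℕ∞ × ℕ)) ∈ Tfam := Or.inr rfl

lemma eq_Bmk_or_eq_univ_of_coe_mem {t : Set (ℕ∞ × ℕ)} {a i : ℕ} (ht : t ∈ Tfam)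
    (hat : ((a : ℕ∞), i) ∈ t) : (∃ m ≤ a, t = Bmk m i) ∨ t = univ := by
  rcases ht with (⟨m, k, rfl⟩ | ⟨k, l, -, rfl⟩) | rfl
  · obtain ⟨rfl, hm⟩ := mem_Bmk_coe.1 hat
    exact Or.inl ⟨m, hm, rfl⟩
  · simp at hat
  · exact Or.inr rfl

lemma isLeast_tfamContaining_of_coe {s : Set (ℕ∞ × ℕ)} {a i : ℕ} {q : ℕ∞ × ℕ}
    (hs : s ∈ tfamContaining (a, i) q) (hball : ∀ m ≤ a, q ∈ Bmk m i → s ⊆ Bmk m i) :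
    IsLeast (tfamContaining (a, i) q) s := by
  refine ⟨hs, fun t ⟨ht, hat, hqt⟩ => ?_⟩
  rcases eq_Bmk_or_eq_univ_of_coe_mem ht hat with ⟨m, hm, rfl⟩ | rfl
  · exact hball m hm hqt
  · exact subset_univ s

lemma exists_isLeast_tfamContaining_coe (a i : ℕ) (q : ℕ∞ × ℕ) :
    ∃ s, IsLeast (tfamContaining (a, i) q) s := by
  have hself : ((a : ℕ∞), i) ∈ Bmk a i := mem_Bmk_coe.2 ⟨rfl, le_rfl⟩
  obtain ⟨b, j⟩ := q
  by_cases hball : ∃ m ≤ a, ((b, j) : ℕ∞ × ℕ) ∈ Bmk m i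
  · induction b using ENat.recTopCoe with
    | top =>
      have hij : i ≤ j := by
        obtain ⟨m, -, hm⟩ := hball
        exact mem_Bmk_top.1 hm
      exact ⟨_, isLeast_tfamContaining_of_coe
        ⟨Bmk_mem_Tfam a i, hself, mem_Bmk_top.2 hij⟩ fun m hm _ => Bmk_subset_Bmk hm⟩
    | coe b =>
      obtain ⟨m, -, hm⟩ := hball
      obtain ⟨rfl, -⟩ := mem_Bmk_coe.1 hm
      refine ⟨_, isLeast_tfamContaining_of_coe
        ⟨Bmk_mem_Tfam (min a b) j, mem_Bmk_coe.2 ⟨rfl, min_le_left a b⟩,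
          mem_Bmk_coe.2 ⟨rfl, min_le_right a b⟩⟩ fun m hma hmb => ?_⟩
      exact Bmk_subset_Bmk (le_min hma (mem_Bmk_coe.1 hmb).2)
  · push Not at hball
    exact ⟨_, isLeast_tfamContaining_of_coe ⟨univ_mem_Tfam, trivial, trivial⟩
      fun m hm hq => absurd hq (hball m hm)⟩

lemma isLeast_tfamContaining_top_top {i j : ℕ} (hij : i ≠ j) :
    IsLeast (tfamContaining ((⊤ : ℕ∞), i) ((⊤ : ℕ∞), j)) {((⊤ : ℕ∞), i), ((⊤ : ℕ∞), j)} :=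
  ⟨⟨Or.inl (Or.inr ⟨i, j, hij, rfl⟩), by simp, by simp⟩,
    fun _ ⟨_, hit, hjt⟩ => insert_subset hit (singleton_subset_iff.2 hjt)⟩

/-- Every two distinct points of `X = (ω+1) × ω` are contained in a smallest
member of `𝓣`. -/
theorem smallest_ball_exists :
    ∀ p q : ℕ∞ × ℕ, p ≠ q →
      ∃ s ∈ Tfam, p ∈ s ∧ q ∈ s ∧ ∀ t ∈ Tfam, p ∈ t → q ∈ t → s ⊆ t := by
  rintro ⟨a, i⟩ ⟨b, j⟩ hne
  obtain ⟨s, ⟨hs, hp, hq⟩, hleast⟩ : ∃ s, IsLeast (tfamContaining (a, i) (b, j)) s := by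
    induction a using ENat.recTopCoe with
    | coe a => exact exists_isLeast_tfamContaining_coe a i (b, j)
    | top =>
      induction b using ENat.recTopCoe with
      | coe b =>
        rw [tfamContaining_comm]
        exact exists_isLeast_tfamContaining_coe b j (⊤, i)
      | top => exact ⟨_, isLeast_tfamContaining_top_top fun h => hne (by rw [h])⟩
  exact ⟨s, hs, hp, hq, fun t ht hpt hqt => hleast ⟨ht, hpt, hqt⟩⟩
end

section
/- With X = (ω+1) × ω and 𝓣 as above (the balls B_{m,k}, the doubletons {(ω,k),(ω,ℓ)} for k ≠ ℓ, and X), the ball space (X, 𝓣) is spherically complete: every nonempty chain in 𝓣 under inclusion has nonempty intersection. -/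
theorem IsChain.subset_sInter_of_forall_subset_imp_eq {α : Type*} {C : Set (Set α)}
    (hC : IsChain (· ⊆ ·) C) {D : Set α} (hD : D ∈ C)
    (hmin : ∀ s ∈ C, s ⊆ D → s = D) :
    D ⊆ ⋂₀ C :=
  Set.subset_sInter fun s hs =>
    (hC.total hD hs).elim id fun hsD => (hmin s hs hsD).ge

theorem mk_mem_Bmk (m k : ℕ) : ((m : ℕ∞), k) ∈ Bmk m k :=
  Or.inl ⟨rfl, le_rfl⟩

theorem top_mem_Bmk (m : ℕ) {k n : ℕ} (h : k ≤ n) : ((⊤ : ℕ∞), n) ∈ Bmk m k :=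
  Or.inr ⟨rfl, h⟩

theorem mk_notMem_pair (m k a b : ℕ) :
    ((m : ℕ∞), k) ∉ ({((⊤ : ℕ∞), a), ((⊤ : ℕ∞), b)} : Set (ℕ∞ × ℕ)) := by
  simp

theorem eq_of_Bmk_subset_Bmk {m k m' k' : ℕ} (h : Bmk m k ⊆ Bmk m' k') : k = k' := by
  rcases h (mk_mem_Bmk m k) with ⟨hk, -⟩ | ⟨hm, -⟩
  · exact hk
  · exact absurd hm (ENat.natCast_ne_top m)

theorem top_mem_of_Bmk_comparable {m k m' k' : ℕ}
    (h : Bmk m' k' ⊆ Bmk m k ∨ Bmk m k ⊆ Bmk m' k') : ((⊤ : ℕ∞), k) ∈ Bmk m' k' :=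
  top_mem_Bmk m' <|
    h.elim (fun h => (eq_of_Bmk_subset_Bmk h).le) fun h => (eq_of_Bmk_subset_Bmk h).ge

theorem eq_pair_of_mem_Tfam_of_subset_pair {s : Set (ℕ∞ × ℕ)} (hs : s ∈ Tfam) {a b : ℕ}
    (hab : a ≠ b) (h : s ⊆ {((⊤ : ℕ∞), a), ((⊤ : ℕ∞), b)}) :
    s = {((⊤ : ℕ∞), a), ((⊤ : ℕ∞), b)} := by
  rcases hs with (⟨m, k, rfl⟩ | ⟨c, d, hcd, rfl⟩) | rfl
  · exact absurd (h (mk_mem_Bmk m k)) (mk_notMem_pair m k a b)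
  · refine Set.eq_of_subset_of_ncard_le h ?_ (Set.toFinite _)
    rw [Set.ncard_pair (by simpa using hab), Set.ncard_pair (by simpa using hcd)]
  · exact absurd (h (Set.mem_univ ((0 : ℕ), 0))) (mk_notMem_pair 0 0 a b)

/-- The ball space `(X, 𝓣)` is spherically complete. -/
theorem Tfam_sphericallyComplete :
    ∀ C ⊆ Tfam, C.Nonempty → IsChain (· ⊆ ·) C → (⋂₀ C).Nonempty := by
  intro C hC _ hchain
  by_cases hpair :
      ∃ k l : ℕ, k ≠ l ∧ ({((⊤ : ℕ∞), k), ((⊤ : ℕ∞), l)} : Set (ℕ∞ × ℕ)) ∈ C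
  · obtain ⟨k, l, hkl, hD⟩ := hpair
    have hleast := hchain.subset_sInter_of_forall_subset_imp_eq hD
      fun s hs hsD => eq_pair_of_mem_Tfam_of_subset_pair (hC hs) hkl hsD
    exact ⟨_, hleast (Set.mem_insert _ _)⟩
  by_cases hball : ∃ m k : ℕ, Bmk m k ∈ C
  · obtain ⟨m, k, hB⟩ := hball
    refine ⟨((⊤ : ℕ∞), k), fun s hs => ?_⟩
    rcases hC hs with (⟨m', k', rfl⟩ | ⟨a, b, hab, rfl⟩) | rfl
    · exact top_mem_of_Bmk_comparable (hchain.total hs hB)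
    · exact absurd ⟨a, b, hab, hs⟩ hpair
    · trivial
  · refine ⟨((⊤ : ℕ∞), 0), fun s hs => ?_⟩
    rcases hC hs with (⟨m, k, rfl⟩ | ⟨a, b, hab, rfl⟩) | rfl
    · exact absurd ⟨m, k, hs⟩ hball
    · exact absurd ⟨a, b, hab, hs⟩ hpair
    · trivial
end

section
/- Let X = ((ω₁+1) × (ω+1)) \ {(ω₁,ω)} and 𝓑 = {B_{α,n} : α < ω₁, n < ω} with B_{α,n} = {(x,y) ∈ X : α ≤ x, n ≤ y}. Then (X, 𝓑) is spherically complete: every nonempty chain in 𝓑 under inclusion has nonempty intersection. -/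
open Ordinal

/-- The set `X = ((ω₁+1) × (ω+1)) \ {(ω₁, ω)}`. -/
def Xset : Set (Ordinal × Ordinal) :=
  {p | p.1 ≤ ω₁ ∧ p.2 ≤ ω ∧ p ≠ (ω₁, ω)}

/-- The ball `B_{α,n} = {(x,y) ∈ X : α ≤ x, n ≤ y}`. -/
def Ball (a n : Ordinal) : Set (Ordinal × Ordinal) :=
  {p ∈ Xset | a ≤ p.1 ∧ n ≤ p.2}

/-- The family `𝓑 = {B_{α,n} : α < ω₁, n < ω}`. -/
def Bfam : Set (Set (Ordinal × Ordinal)) :=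
  {s | ∃ a < ω₁, ∃ n < ω, s = Ball a n}

/-!
The balls of a chain have pairwise comparable index pairs `(α, n)`. If the second indices
are bounded by some `m < ω`, then `(ω₁, m)` lies in every ball. Otherwise pick, for each
`k < ω`, a ball of the chain with second index above `k`; its first index bounds the first
index of every ball with second index `k`, so the countable supremum `β < ω₁` of these first
indices bounds all first indices, and `(β, ω)` lies in every ball.
-/

theorem IsChain.exists_fst_le_or_exists_snd_le {S : Set (Ordinal × Ordinal)}
    (hS : IsChain (· ≤ ·) S) (hfst : ∀ p ∈ S, p.1 < ω₁) (hsnd : ∀ p ∈ S, p.2 < ω) :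
    (∃ b < ω₁, ∀ p ∈ S, p.1 ≤ b) ∨ ∃ m < ω, ∀ p ∈ S, p.2 ≤ m := by
  refine or_iff_not_imp_right.2 fun hunbounded ↦ ?_
  push Not at hunbounded
  choose f hfS hf using fun k : ℕ ↦ hunbounded k (natCast_lt_omega0 k)
  refine ⟨⨆ k, (f k).1, iSup_lt_omega_one fun k ↦ hfst _ (hfS k), fun p hp ↦ ?_⟩
  obtain ⟨k, hk⟩ := lt_omega0.1 (hsnd p hp)
  have hpf : p ≤ f k := (hS.total hp (hfS k)).resolve_right fun hfp ↦
    (hf k).not_ge (hk ▸ hfp.2)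
  exact hpf.1.trans (le_ciSup bddAbove_of_small k)

theorem mk_mem_Xset_of_lt_omega_one {a n : Ordinal} (ha : a < ω₁) (hn : n ≤ ω) :
    (a, n) ∈ Xset :=
  ⟨ha.le, hn, by simp [ha.ne]⟩

theorem mk_mem_Xset_of_lt_omega0 {a n : Ordinal} (ha : a ≤ ω₁) (hn : n < ω) :
    (a, n) ∈ Xset :=
  ⟨ha, hn.le, by simp [hn.ne]⟩

theorem le_of_Ball_subset_Ball {a n a' n' : Ordinal} (ha : a < ω₁) (hn : n < ω)
    (h : Ball a n ⊆ Ball a' n') : (a', n') ≤ (a, n) :=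
  (h ⟨mk_mem_Xset_of_lt_omega_one ha hn.le, le_rfl, le_rfl⟩).2

theorem isChain_ball_indices {C : Set (Set (Ordinal × Ordinal))} (hC : IsChain (· ⊆ ·) C) :
    IsChain (· ≤ ·) {p : Ordinal × Ordinal | p.1 < ω₁ ∧ p.2 < ω ∧ Ball p.1 p.2 ∈ C} := by
  rintro p ⟨hp₁, hp₂, hpC⟩ q ⟨hq₁, hq₂, hqC⟩ -
  rcases hC.total hpC hqC with hpq | hqp
  · exact Or.inr (le_of_Ball_subset_Ball hp₁ hp₂ hpq)
  · exact Or.inl (le_of_Ball_subset_Ball hq₁ hq₂ hqp)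

/-- The ball space `(X, 𝓑)` is spherically complete. -/
theorem Bfam_sphericallyComplete :
    ∀ C ⊆ Bfam, C.Nonempty → IsChain (· ⊆ ·) C → (⋂₀ C).Nonempty := by
  intro C hCB _ hC
  rcases (isChain_ball_indices hC).exists_fst_le_or_exists_snd_le (fun p hp ↦ hp.1)
      (fun p hp ↦ hp.2.1) with ⟨b, hb, hbound⟩ | ⟨m, hm, hbound⟩
  · refine ⟨(b, ω), fun s hs ↦ ?_⟩
    obtain ⟨a, ha, n, hn, rfl⟩ := hCB hs
    exact ⟨mk_mem_Xset_of_lt_omega_one hb le_rfl, hbound (a, n) ⟨ha, hn, hs⟩, hn.le⟩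
  · refine ⟨(ω₁, m), fun s hs ↦ ?_⟩
    obtain ⟨a, ha, n, hn, rfl⟩ := hCB hs
    exact ⟨mk_mem_Xset_of_lt_omega0 le_rfl hm, ha.le, hbound (a, n) ⟨ha, hn, hs⟩⟩
end

section
/- Let X = ((ω₁+1) × (ω+1)) \ {(ω₁,ω)} and 𝓑 = {B_{α,n} : α < ω₁, n < ω} as above. For each α < ω₁ the chain 𝓒_α = {B_{α,n} : n < ω} has intersection C_α = {(x, ω) : α ≤ x < ω₁}, the sets C_α (α < ω₁) form a strictly decreasing chain with ⋂_{α<ω₁} C_α = ∅. Hence (X, 𝓑) is not chain intersection stable and no chain intersection closed expansion of 𝓑 is spherically complete. -/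
open Ordinal

/-- `C_α = {(x, ω) : α ≤ x < ω₁}`. -/
def Cset (a : Ordinal) : Set (Ordinal × Ordinal) :=
  {p | a ≤ p.1 ∧ p.1 < ω₁ ∧ p.2 = ω}

/-!
Every chain of balls of `𝓑` has a common point: `(ω₁, N)` if the second indices of its balls
are bounded by some `N < ω`, and otherwise `(β, ω)`, where `β` is the supremum of the first
indices of countably many balls whose second indices are unbounded. These balls lie inside all
the others, and `β < ω₁` since `ω₁` has uncountable cofinality. On the other hand the sets `C_α`
decrease to `∅` because `ω₁` is a limit. So no chain of `𝓑` has the intersection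
`⋂_α ⋂ 𝓒_α = ∅`, and a chain intersection closed expansion of `𝓑` contains every `C_α`.
-/

lemma Antitone.isChain_setOf_exists_eq {ι α : Type*} [LinearOrder ι] {f : ι → Set α}
    (hf : Antitone f) (P : ι → Prop) : IsChain (· ⊆ ·) {s | ∃ i, P i ∧ s = f i} :=
  hf.isChain_range.mono (by rintro _ ⟨i, -, rfl⟩; exact ⟨i, rfl⟩)

def ballChain (a : Ordinal) : Set (Set (Ordinal × Ordinal)) :=
  {s | ∃ n < ω, s = Ball a n}

def ballChains : Set (Set (Set (Ordinal × Ordinal))) :=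
  {C | ∃ a < ω₁, C = ballChain a}

def csetChain : Set (Set (Ordinal × Ordinal)) :=
  {s | ∃ a < ω₁, s = Cset a}

lemma mem_Xset_of_fst_lt {p : Ordinal × Ordinal} (h₁ : p.1 < ω₁) (h₂ : p.2 ≤ ω) : p ∈ Xset :=
  ⟨h₁.le, h₂, fun h => h₁.ne (congrArg Prod.fst h)⟩

lemma mem_Xset_of_snd_lt {p : Ordinal × Ordinal} (h₁ : p.1 ≤ ω₁) (h₂ : p.2 < ω) : p ∈ Xset :=
  ⟨h₁, h₂.le, fun h => h₂.ne (congrArg Prod.snd h)⟩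

lemma mem_Ball_self {a n : Ordinal} (ha : a < ω₁) (hn : n ≤ ω) : (a, n) ∈ Ball a n :=
  ⟨mem_Xset_of_fst_lt ha hn, le_rfl, le_rfl⟩

lemma antitone_Ball (a : Ordinal) : Antitone (Ball a) :=
  fun _ _ hnm _ hp => ⟨hp.1, hp.2.1, hnm.trans hp.2.2⟩

lemma antitone_Cset : Antitone Cset :=
  fun _ _ hab _ hp => ⟨hab.trans hp.1, hp.2⟩

lemma isChain_ballChain (a : Ordinal) : IsChain (· ⊆ ·) (ballChain a) :=
  (antitone_Ball a).isChain_setOf_exists_eq _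

lemma isChain_csetChain : IsChain (· ⊆ ·) csetChain :=
  antitone_Cset.isChain_setOf_exists_eq _

lemma ballChain_nonempty (a : Ordinal) : (ballChain a).Nonempty :=
  ⟨_, 0, omega0_pos, rfl⟩

lemma csetChain_nonempty : csetChain.Nonempty :=
  ⟨_, 0, omega_pos 1, rfl⟩

lemma ballChain_subset_Bfam {a : Ordinal} (ha : a < ω₁) : ballChain a ⊆ Bfam := by
  rintro _ ⟨n, hn, rfl⟩
  exact ⟨a, ha, n, hn, rfl⟩

lemma sInter_ballChain (a : Ordinal) : ⋂₀ ballChain a = Cset a := by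
  ext p
  constructor
  · intro hp
    have hB : ∀ n < ω, p ∈ Ball a n := fun n hn => hp _ ⟨n, hn, rfl⟩
    obtain ⟨⟨hp₁, hp₂, hp_ne⟩, ha, -⟩ := hB 0 omega0_pos
    have hω : p.2 = ω := hp₂.antisymm (omega0_le.2 fun n => (hB n (natCast_lt_omega0 n)).2.2)
    exact ⟨ha, hp₁.lt_of_ne fun h => hp_ne (Prod.ext h hω), hω⟩
  · rintro ⟨ha, hp₁, hω⟩ _ ⟨n, hn, rfl⟩
    exact ⟨mem_Xset_of_fst_lt hp₁ hω.le, ha, hω ▸ hn.le⟩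

lemma Cset_nonempty {a : Ordinal} (ha : a < ω₁) : (Cset a).Nonempty :=
  ⟨(a, ω), le_rfl, ha, rfl⟩

lemma Cset_ssubset_Cset {a b : Ordinal} (hab : a < b) (hb : b < ω₁) : Cset b ⊂ Cset a :=
  have hmem : (a, ω) ∈ Cset a := ⟨le_rfl, hab.trans hb, rfl⟩
  ⟨antitone_Cset hab.le, fun h => hab.not_ge (h hmem).1⟩

lemma exists_notMem_Cset (p : Ordinal × Ordinal) : ∃ a < ω₁, p ∉ Cset a := by
  by_cases hp : p.1 < ω₁
  · exact ⟨Order.succ p.1, (Cardinal.isSuccLimit_omega 1).succ_lt hp,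
      fun h => (Order.lt_succ p.1).not_ge h.1⟩
  · exact ⟨0, omega_pos 1, fun h => hp h.2.1⟩

lemma sInter_csetChain_eq_empty : ⋂₀ csetChain = ∅ :=
  Set.eq_empty_of_forall_notMem fun p hp =>
    have ⟨a, ha, hpa⟩ := exists_notMem_Cset p
    hpa (hp _ ⟨a, ha, rfl⟩)

lemma isChain_sInter_ballChains : IsChain (· ⊆ ·) {I | ∃ C ∈ ballChains, I = ⋂₀ C} :=
  isChain_csetChain.mono <| by
    rintro _ ⟨_, ⟨a, ha, rfl⟩, rfl⟩
    exact ⟨a, ha, sInter_ballChain a⟩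

lemma biInter_sInter_ballChains_eq_empty : ⋂ C ∈ ballChains, ⋂₀ C = ∅ :=
  Set.eq_empty_of_forall_notMem fun p hp =>
    have ⟨a, ha, hpa⟩ := exists_notMem_Cset p
    hpa (sInter_ballChain a ▸ Set.mem_iInter₂.1 hp _ ⟨a, ha, rfl⟩)

lemma le_of_Ball_mem_isChain {U : Set (Set (Ordinal × Ordinal))} (hU : IsChain (· ⊆ ·) U)
    {a b n m : Ordinal} (hs : Ball a n ∈ U) (ht : Ball b m ∈ U) (ha : a < ω₁) (hb : b < ω₁)
    (hm : m ≤ ω) (hnm : n < m) : a ≤ b := by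
  rcases hU.total hs ht with h | h
  · exact absurd (h (mem_Ball_self ha (hnm.le.trans hm))).2.2 hnm.not_ge
  · exact (h (mem_Ball_self hb hm)).2.1

lemma sInter_nonempty_of_isChain {U : Set (Set (Ordinal × Ordinal))} (hUB : U ⊆ Bfam)
    (hU : IsChain (· ⊆ ·) U) : (⋂₀ U).Nonempty := by
  choose! f hf g hg hfg using fun s (hs : s ∈ U) => hUB hs
  by_cases hbdd : ∃ N : ℕ, ∀ s ∈ U, g s ≤ N
  · obtain ⟨N, hN⟩ := hbdd
    refine ⟨(ω₁, N), fun s hs => hfg s hs ▸ ?_⟩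
    exact ⟨mem_Xset_of_snd_lt le_rfl (natCast_lt_omega0 N), (hf s hs).le, hN s hs⟩
  · push Not at hbdd
    choose t ht hgt using hbdd
    have hβ : ⨆ k, f (t k) < ω₁ := iSup_lt_omega_one fun k => hf _ (ht k)
    refine ⟨(⨆ k, f (t k), ω), fun s hs => hfg s hs ▸ ?_⟩
    obtain ⟨k, hk⟩ := lt_omega0.1 (hg s hs)
    have hs' : Ball (f s) (g s) ∈ U := hfg s hs ▸ hs
    have ht' : Ball (f (t k)) (g (t k)) ∈ U := hfg _ (ht k) ▸ ht k
    have hle := le_of_Ball_mem_isChain hU hs' ht' (hf s hs) (hf _ (ht k)) (hg _ (ht k)).le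
      (hk ▸ hgt k)
    exact ⟨mem_Xset_of_fst_lt hβ le_rfl, hle.trans (Ordinal.le_iSup (fun k => f (t k)) k),
      (hg s hs).le⟩

/-- Each chain `𝓒_α = {B_{α,n} : n < ω}` has intersection `C_α`; the `C_α`
form a strictly decreasing chain with empty intersection. Hence `(X, 𝓑)` is not
chain intersection stable and no chain intersection closed expansion of `𝓑` is
spherically complete. -/
theorem Bfam_not_chainIntersectionStable :
    (∀ a < ω₁, ⋂₀ {s | ∃ n < ω, s = Ball a n} = Cset a) ∧
    (∀ a, ∀ b, a < b → b < ω₁ → Cset b ⊂ Cset a) ∧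
    (⋂₀ {s | ∃ a < ω₁, s = Cset a} = ∅) ∧
    -- `(X, 𝓑)` is not chain intersection stable:
    ¬(∀ F : Set (Set (Set (Ordinal × Ordinal))), F.Nonempty →
        (∀ C ∈ F, C ⊆ Bfam ∧ C.Nonempty ∧ IsChain (· ⊆ ·) C) →
        IsChain (· ⊆ ·) {I | ∃ C ∈ F, I = ⋂₀ C} →
        ∃ U ⊆ Bfam, U.Nonempty ∧ IsChain (· ⊆ ·) U ∧ ⋂₀ U = ⋂ C ∈ F, ⋂₀ C) ∧
    -- no chain intersection closed expansion of `𝓑` is spherically complete: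
    ∀ B' : Set (Set (Ordinal × Ordinal)), Bfam ⊆ B' →
      (∀ C ⊆ B', C.Nonempty → IsChain (· ⊆ ·) C → ⋂₀ C = ∅ ∨ ⋂₀ C ∈ B') →
      ¬(∀ C ⊆ B', C.Nonempty → IsChain (· ⊆ ·) C → (⋂₀ C).Nonempty) := by
  refine ⟨fun a _ => sInter_ballChain a, fun _ _ => Cset_ssubset_Cset, sInter_csetChain_eq_empty,
    fun hstable => ?_, fun B' hB' hclosed hcomplete => ?_⟩
  · obtain ⟨U, hUB, -, hU, hUempty⟩ := hstable ballChains ⟨ballChain 0, 0, omega_pos 1, rfl⟩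
      (fun _ ⟨a, ha, hC⟩ => hC ▸ ⟨ballChain_subset_Bfam ha, ballChain_nonempty a,
        isChain_ballChain a⟩)
      isChain_sInter_ballChains
    exact (sInter_nonempty_of_isChain hUB hU).ne_empty
      (hUempty.trans biInter_sInter_ballChains_eq_empty)
  · have hcset : csetChain ⊆ B' := by
      rintro _ ⟨a, ha, rfl⟩
      rw [← sInter_ballChain]
      refine (hclosed _ ((ballChain_subset_Bfam ha).trans hB') (ballChain_nonempty a)
        (isChain_ballChain a)).resolve_left ?_
      exact sInter_ballChain a ▸ (Cset_nonempty ha).ne_empty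
    exact (hcomplete _ hcset csetChain_nonempty isChain_csetChain).ne_empty
      sInter_csetChain_eq_empty
end
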